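/- arXiv:2604.01656 — 10 statements merged into one kernel-verified Lean document; each statement's English description precedes it below -/
import Mathlib

section
/- Let A ∈ ℝ^{n×n} and S ∈ ℝ^{ν×ν} be real matrices such that no complex number is simultaneously an eigenvalue of A (complexified) and an eigenvalue of S (complexified). Then for every W ∈ ℝ^{n×ν} the Sylvester equation ΠS = AΠ + W has exactly one solution Π ∈ ℝ^{n×ν}; equivalently, the Sylvester operator Π ↦ ΠS − AΠ is a linear bijection of ℝ^{n×ν}. -/
open Matrix Polynomial

lemma eval_charpoly' {k : Type*} [Fintype k] [DecidableEq k] (M : Matrix k k ℂ) (μ : ℂ) :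
    M.charpoly.eval μ = (algebraMap ℂ (Matrix k k ℂ) μ - M).det := by
  rw [Matrix.charpoly, ← Polynomial.coe_evalRingHom, RingHom.map_det]
  congr 1
  ext i j
  by_cases h : i = j
  · subst h
    simp [Matrix.charmatrix_apply_eq, Matrix.algebraMap_matrix_apply]
  · simp [Matrix.charmatrix_apply_ne _ _ _ h, Matrix.algebraMap_matrix_apply, h]

lemma root_mem_spectrum' {k : Type*} [Fintype k] [DecidableEq k] (M : Matrix k k ℂ) (μ : ℂ)
    (h : M.charpoly.IsRoot μ) : μ ∈ spectrum ℂ M := by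
  rw [spectrum.mem_iff]
  intro hu
  rw [Matrix.isUnit_iff_isUnit_det, ← eval_charpoly'] at hu
  rw [Polynomial.IsRoot] at h
  rw [h] at hu
  exact hu.ne_zero rfl

lemma intertwine_pow {n ν : ℕ} (B : Matrix (Fin n) (Fin n) ℂ) (T : Matrix (Fin ν) (Fin ν) ℂ)
    (P : Matrix (Fin n) (Fin ν) ℂ) (h : P * T = B * P) (k : ℕ) : P * T ^ k = B ^ k * P := by
  induction k with
  | zero => simp
  | succ k ih =>
    rw [pow_succ, pow_succ', ← Matrix.mul_assoc, ih, Matrix.mul_assoc, h, ← Matrix.mul_assoc,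
      ← pow_succ, ← pow_succ']

lemma intertwine_aeval {n ν : ℕ} (B : Matrix (Fin n) (Fin n) ℂ) (T : Matrix (Fin ν) (Fin ν) ℂ)
    (P : Matrix (Fin n) (Fin ν) ℂ) (h : P * T = B * P) (p : ℂ[X]) :
    P * aeval T p = aeval B p * P := by
  induction p using Polynomial.induction_on' with
  | add p q hp hq => rw [map_add, map_add, Matrix.mul_add, Matrix.add_mul, hp, hq]
  | monomial k a =>
    rw [aeval_monomial, aeval_monomial, Algebra.algebraMap_eq_smul_one,
      Algebra.algebraMap_eq_smul_one, smul_mul_assoc, smul_mul_assoc, one_mul, one_mul,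
      Matrix.mul_smul, Matrix.smul_mul, intertwine_pow B T P h k]

/-- If the complexified spectra of `A ∈ ℝ^{n×n}` and `S ∈ ℝ^{ν×ν}` are
disjoint, then for every `W ∈ ℝ^{n×ν}` the Sylvester equation `Π S = A Π + W` has exactly
one solution; equivalently the Sylvester operator `Π ↦ Π S - A Π` is a linear bijection. -/
theorem sylvester_unique_solution (n ν : ℕ)
    (A : Matrix (Fin n) (Fin n) ℝ) (S : Matrix (Fin ν) (Fin ν) ℝ)
    (hdisj : ∀ μ : ℂ, ¬(μ ∈ spectrum ℂ (A.map Complex.ofReal) ∧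
      μ ∈ spectrum ℂ (S.map Complex.ofReal))) :
    (∀ W : Matrix (Fin n) (Fin ν) ℝ,
      ∃! Pi : Matrix (Fin n) (Fin ν) ℝ, Pi * S = A * Pi + W) ∧
    Function.Bijective (fun Pi : Matrix (Fin n) (Fin ν) ℝ => Pi * S - A * Pi) := by
  -- injectivity of the Sylvester operator
  have hinj : ∀ Pi : Matrix (Fin n) (Fin ν) ℝ, Pi * S = A * Pi → Pi = 0 := by
    intro Pi hPi
    rcases Nat.eq_zero_or_pos ν with hν | hν
    · subst hν; ext i j; exact absurd j.2 (by omega)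
    rcases Nat.eq_zero_or_pos n with hn | hn
    · subst hn; ext i j; exact absurd i.2 (by omega)
    set B := A.map (Complex.ofReal : ℝ → ℂ) with hB
    set T := S.map (Complex.ofReal : ℝ → ℂ) with hT
    set P := Pi.map (Complex.ofReal : ℝ → ℂ) with hP
    have hC : P * T = B * P := by
      have h2 : (Pi * S).map (Complex.ofRealHom : ℝ →+* ℂ) =
          (A * Pi).map (Complex.ofRealHom : ℝ →+* ℂ) := by rw [hPi]
      rw [Matrix.map_mul, Matrix.map_mul] at h2
      exact h2
    have key : aeval B T.charpoly * P = 0 := by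
      rw [← intertwine_aeval B T P hC, Matrix.aeval_self_charpoly, Matrix.mul_zero]
    have hunit : IsUnit (aeval B T.charpoly) := by
      by_contra hu
      have h0 : (0 : ℂ) ∈ spectrum ℂ (aeval B T.charpoly) := by
        rwa [spectrum.zero_mem_iff]
      have : Nontrivial (Matrix (Fin n) (Fin n) ℂ) := by
        haveI : NeZero n := ⟨hn.ne'⟩
        infer_instance
      rw [spectrum.map_polynomial_aeval_of_degree_pos B T.charpoly
        (by rw [Matrix.charpoly_degree_eq_dim]; simpa using hν)] at h0
      obtain ⟨μ, hμ, hroot⟩ := h0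
      exact hdisj μ ⟨hμ, root_mem_spectrum' T μ hroot⟩
    have hP0 : P = 0 := by
      obtain ⟨u, hu⟩ := hunit
      calc P = (↑u⁻¹ * ↑u : Matrix (Fin n) (Fin n) ℂ) * P := by
              rw [u.inv_mul, Matrix.one_mul]
        _ = (↑u⁻¹ : Matrix (Fin n) (Fin n) ℂ) * ((u : Matrix (Fin n) (Fin n) ℂ) * P) :=
              Matrix.mul_assoc _ _ _
        _ = 0 := by rw [hu, key, Matrix.mul_zero]
    ext i j
    have := congrFun (congrFun hP0 i) j
    simpa [hP, Matrix.map_apply] using this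
  -- the Sylvester operator as a linear map
  let f : Matrix (Fin n) (Fin ν) ℝ →ₗ[ℝ] Matrix (Fin n) (Fin ν) ℝ :=
    { toFun := fun Pi => Pi * S - A * Pi
      map_add' := by intro x y; simp only [Matrix.add_mul, Matrix.mul_add]; abel
      map_smul' := by intro c x; simp [Matrix.smul_mul, Matrix.mul_smul, smul_sub] }
  have hfinj : Function.Injective f := by
    rw [← LinearMap.ker_eq_bot, LinearMap.ker_eq_bot']
    intro Pi hPi
    exact hinj Pi (by simpa [f, sub_eq_zero] using hPi)
  have hfbij : Function.Bijective f :=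
    ⟨hfinj, (LinearMap.injective_iff_surjective).mp hfinj⟩
  constructor
  · intro W
    obtain ⟨Pi, hPi, huniq⟩ := hfbij.existsUnique W
    have hPi' : Pi * S - A * Pi = W := hPi
    refine ⟨Pi, sub_eq_iff_eq_add'.mp hPi', fun y hy => huniq y ?_⟩
    show y * S - A * y = W
    exact sub_eq_iff_eq_add'.mpr hy
  · exact hfbij
end

section
/- Let ω : ℝ → ℝ^ν and x : ℝ → ℝ^n be differentiable functions satisfying ω'(t) = Sω(t) and x'(t) = Ax(t) + P·L·ω(t) for all t, and let Π ∈ ℝ^{n×ν} satisfy the Sylvester equation ΠS = AΠ + PL. If x(0) = Πω(0), then x(t) = Πω(t) for all t ∈ ℝ, and consequently the output y(t) := Cx(t) + Q·L·ω(t) satisfies y(t) = (CΠ + QL)ω(t) for all t ∈ ℝ (i.e., on the invariant manifold the input–output behavior is given by the moment CΠ + QL). -/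
/-!
Both `x` and `Πω` solve the same affine ODE `z' = Az + PLω(t)`: for `Πω` this is exactly the
Sylvester equation, since `(Πω)' = ΠSω = AΠω + PLω`. The right-hand side is globally Lipschitz
in `z`, so by uniqueness of ODE solutions the two curves, which agree at `t = 0`, agree everywhere.
The output formula then follows by substituting `x = Πω`.
-/

open Matrix

section AffineODE

variable {E : Type*} [NormedAddCommGroup E] [NormedSpace ℝ E]

theorem eq_of_hasDerivAt_clm_add {A : E →L[ℝ] E} {u f g : ℝ → E}
    (hf : ∀ t, HasDerivAt f (A (f t) + u t) t) (hg : ∀ t, HasDerivAt g (A (g t) + u t) t)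
    {t₀ : ℝ} (h : f t₀ = g t₀) : f = g :=
  ODE_solution_unique_univ (v := fun t z => A z + u t) (s := fun _ => Set.univ)
    (fun t => (by simpa using A.lipschitz.add (LipschitzWith.const (u t)) :
      LipschitzWith ‖A‖₊ fun z => A z + u t).lipschitzOnWith)
    (fun t => ⟨hf t, trivial⟩) (fun t => ⟨hg t, trivial⟩) h

end AffineODE

section MatrixODE

variable {m k : Type*} [Fintype m] [Fintype k]

theorem eq_of_hasDerivAt_mulVec_add {A : Matrix m m ℝ} {u f g : ℝ → m → ℝ}
    (hf : ∀ t, HasDerivAt f (A *ᵥ f t + u t) t) (hg : ∀ t, HasDerivAt g (A *ᵥ g t + u t) t)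
    {t₀ : ℝ} (h : f t₀ = g t₀) : f = g :=
  eq_of_hasDerivAt_clm_add (A := LinearMap.toContinuousLinearMap A.mulVecLin) hf hg h

theorem hasDerivAt_mulVec {M : Matrix m k ℝ} {ω : ℝ → k → ℝ} {ω' : k → ℝ} {t : ℝ}
    (hω : HasDerivAt ω ω' t) : HasDerivAt (fun s => M *ᵥ ω s) (M *ᵥ ω') t :=
  (LinearMap.toContinuousLinearMap M.mulVecLin).hasFDerivAt.comp_hasDerivAt t hω

theorem hasDerivAt_mulVec_of_sylvester {X : Matrix m k ℝ} {A : Matrix m m ℝ}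
    {S : Matrix k k ℝ} {B : Matrix m k ℝ} (hX : X * S = A * X + B) {ω : ℝ → k → ℝ} {t : ℝ}
    (hω : HasDerivAt ω (S *ᵥ ω t) t) :
    HasDerivAt (fun s => X *ᵥ ω s) (A *ᵥ (X *ᵥ ω t) + B *ᵥ ω t) t := by
  simpa only [mulVec_mulVec, hX, add_mulVec] using hasDerivAt_mulVec (M := X) hω

end MatrixODE

/-- If `ω' = Sω`, `x' = Ax + PLω`, `Π` solves the Sylvester equation
`ΠS = AΠ + PL`, and `x(0) = Πω(0)`, then `x(t) = Πω(t)` for all `t`, and the output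
`y(t) = Cx(t) + QLω(t)` satisfies `y(t) = (CΠ + QL)ω(t)` for all `t`. -/
theorem moment_on_invariant_manifold (n p q ν : ℕ)
    (A : Matrix (Fin n) (Fin n) ℝ) (C : Matrix (Fin p) (Fin n) ℝ)
    (P : Matrix (Fin n) (Fin q) ℝ) (Q : Matrix (Fin p) (Fin q) ℝ)
    (S : Matrix (Fin ν) (Fin ν) ℝ) (L : Matrix (Fin q) (Fin ν) ℝ)
    (ω : ℝ → Fin ν → ℝ) (x : ℝ → Fin n → ℝ)
    (hω : ∀ t : ℝ, HasDerivAt ω (S.mulVec (ω t)) t)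
    (hx : ∀ t : ℝ, HasDerivAt x (A.mulVec (x t) + (P * L).mulVec (ω t)) t)
    (Pi : Matrix (Fin n) (Fin ν) ℝ)
    (hPi : Pi * S = A * Pi + P * L)
    (h0 : x 0 = Pi.mulVec (ω 0)) :
    (∀ t : ℝ, x t = Pi.mulVec (ω t)) ∧
    (∀ t : ℝ, C.mulVec (x t) + (Q * L).mulVec (ω t) = (C * Pi + Q * L).mulVec (ω t)) := by
  have hx_eq : x = fun t => Pi *ᵥ ω t :=
    eq_of_hasDerivAt_mulVec_add hx (fun t => hasDerivAt_mulVec_of_sylvester hPi (hω t)) h0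
  refine ⟨fun t => congrFun hx_eq t, fun t => ?_⟩
  rw [hx_eq, add_mulVec, mulVec_mulVec]
end

section
/- Assume the spectra of A and S are disjoint. Let (Π_x, Π_ξ) solve the closed-loop Sylvester equation, let Π ∈ ℝ^{n×ν} solve ΠS = AΠ + PL, and let Π̂ ∈ ℝ^{n×ν} solve Π̂S = AΠ̂ + B·(HΠ_ξ). Then Π_x = Π + Π̂, and consequently the closed-loop moment decomposes as M_cl = CΠ_x + DHΠ_ξ + QL = (CΠ + QL) + (CΠ̂ + D·(HΠ_ξ)), i.e., M_cl = M_open + T_S(M_c) where M_c = HΠ_ξ. -/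
open Matrix Polynomial

/-!
Subtracting `Π S = A Π + P L` and `Π̂ S = A Π̂ + B H Π_ξ` from the first block row of the
closed-loop Sylvester equation shows that `W := Π_x - Π - Π̂` satisfies `W S = A W`. Then
`W p(S) = p(A) W` for every polynomial `p`; for `p` the characteristic polynomial of `A` the
right side vanishes by Cayley–Hamilton, while `p(S)` is invertible because no root of `p` lies
in the spectrum of `S`. Hence `W = 0`, and the moment identity follows by expanding `C Π_x`.
-/

namespace Matrix

lemma fromRows_add_fromRows {R m₁ m₂ n : Type*} [Add R] (A₁ B₁ : Matrix m₁ n R)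
    (A₂ B₂ : Matrix m₂ n R) :
    fromRows A₁ A₂ + fromRows B₁ B₂ = fromRows (A₁ + B₁) (A₂ + B₂) := by
  ext (_ | _) _ <;> rfl

section Intertwining

variable {R k l : Type*} [CommSemiring R] [Fintype k] [DecidableEq k] [Fintype l] [DecidableEq l]
  {A : Matrix k k R} {S : Matrix l l R} {W : Matrix k l R}

lemma mul_pow_eq_pow_mul_of_mul_eq_mul (hW : W * S = A * W) (j : ℕ) :
    W * S ^ j = A ^ j * W := by
  induction j with
  | zero => simp
  | succ j ih => rw [pow_succ, pow_succ, ← Matrix.mul_assoc, ih, Matrix.mul_assoc, hW,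
      Matrix.mul_assoc]

lemma mul_aeval_eq_aeval_mul_of_mul_eq_mul (hW : W * S = A * W) (p : R[X]) :
    W * aeval S p = aeval A p * W := by
  induction p using Polynomial.induction_on' with
  | add p q hp hq => rw [map_add, map_add, Matrix.mul_add, Matrix.add_mul, hp, hq]
  | monomial j c =>
    rw [aeval_monomial, aeval_monomial, ← Algebra.smul_def, ← Algebra.smul_def,
      Matrix.mul_smul, Matrix.smul_mul, mul_pow_eq_pow_mul_of_mul_eq_mul hW]

end Intertwining

end Matrix

lemma Polynomial.isUnit_aeval_of_monic_of_disjoint_spectrum {K 𝒜 : Type*} [Field K]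
    [IsAlgClosed K] [Ring 𝒜] [Algebra K 𝒜] {p : K[X]} (hp : p.Monic) {a : 𝒜}
    (hroots : ∀ μ ∈ spectrum K a, ¬p.IsRoot μ) : IsUnit (aeval a p) := by
  by_contra hu
  rw [(IsAlgClosed.splits p).eq_prod_roots_of_monic hp] at hu
  obtain ⟨μ, hμ, hroot⟩ := spectrum.exists_mem_of_not_isUnit_aeval_prod hu
  exact hroots μ hμ hroot

namespace Matrix

variable {k l : Type*} [Fintype k] [DecidableEq k] [Fintype l] [DecidableEq l]

lemma eq_zero_of_mul_eq_mul_of_disjoint_spectrum {K : Type*} [Field K] [IsAlgClosed K]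
    {A : Matrix k k K} {S : Matrix l l K} (hdisj : Disjoint (spectrum K A) (spectrum K S))
    {W : Matrix k l K} (hW : W * S = A * W) : W = 0 := by
  have hunit : IsUnit (aeval S A.charpoly) :=
    isUnit_aeval_of_monic_of_disjoint_spectrum A.charpoly_monic fun μ hμS hμA =>
      Set.disjoint_left.1 hdisj (mem_spectrum_of_isRoot_charpoly hμA) hμS
  have hzero : W * aeval S A.charpoly = 0 := by
    rw [mul_aeval_eq_aeval_mul_of_mul_eq_mul hW, aeval_self_charpoly, Matrix.zero_mul]
  calc W = W * aeval S A.charpoly * (hunit.unit⁻¹ : (Matrix l l K)ˣ).val := by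
        rw [Matrix.mul_assoc, hunit.mul_val_inv, Matrix.mul_one]
    _ = 0 := by rw [hzero, Matrix.zero_mul]

lemma eq_of_sylvester_of_disjoint_spectrum_map {K L : Type*} [Field K] [Field L]
    [IsAlgClosed L] (f : K →+* L) {A : Matrix k k K} {S : Matrix l l K}
    (hdisj : Disjoint (spectrum L (A.map f)) (spectrum L (S.map f)))
    {E X₁ X₂ : Matrix k l K} (h₁ : X₁ * S = A * X₁ + E) (h₂ : X₂ * S = A * X₂ + E) :
    X₁ = X₂ := by
  have hW : (X₁ - X₂) * S = A * (X₁ - X₂) := by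
    rw [Matrix.sub_mul, Matrix.mul_sub, h₁, h₂, add_sub_add_right_eq_sub]
  have hWf : (X₁ - X₂).map f * S.map f = A.map f * (X₁ - X₂).map f := by
    rw [← Matrix.map_mul, ← Matrix.map_mul, hW]
  have hzero := eq_zero_of_mul_eq_mul_of_disjoint_spectrum hdisj hWf
  rw [← Matrix.map_zero f (map_zero f), map_injective f.injective |>.eq_iff] at hzero
  exact sub_eq_zero.1 hzero

end Matrix

/-- Assuming disjoint spectra of `A` and `S`, if `(Π_x, Π_ξ)` solves the
closed-loop Sylvester equation, `Π` solves `ΠS = AΠ + PL` and `Π̂` solves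
`Π̂S = AΠ̂ + B(HΠ_ξ)`, then `Π_x = Π + Π̂` and the closed-loop moment decomposes as
`M_cl = M_open + T_S(M_c)` with `M_c = HΠ_ξ`. -/
theorem closed_loop_moment_decomposition (n m p q ν ρ : ℕ)
    (A : Matrix (Fin n) (Fin n) ℝ) (B : Matrix (Fin n) (Fin m) ℝ)
    (C : Matrix (Fin p) (Fin n) ℝ) (D : Matrix (Fin p) (Fin m) ℝ)
    (P : Matrix (Fin n) (Fin q) ℝ) (Q : Matrix (Fin p) (Fin q) ℝ)
    (S : Matrix (Fin ν) (Fin ν) ℝ) (L : Matrix (Fin q) (Fin ν) ℝ)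
    (F : Matrix (Fin ρ) (Fin ρ) ℝ) (G : Matrix (Fin ρ) (Fin p) ℝ)
    (H : Matrix (Fin m) (Fin ρ) ℝ)
    (hdisj : ∀ μ : ℂ, ¬(μ ∈ spectrum ℂ (A.map Complex.ofReal) ∧
      μ ∈ spectrum ℂ (S.map Complex.ofReal)))
    (Pix : Matrix (Fin n) (Fin ν) ℝ) (Piξ : Matrix (Fin ρ) (Fin ν) ℝ)
    (hcl : Matrix.fromRows Pix Piξ * S =
      Matrix.fromBlocks A (B * H) (G * C) (F + G * D * H) * Matrix.fromRows Pix Piξ +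
        Matrix.fromRows P (G * Q) * L)
    (Pi : Matrix (Fin n) (Fin ν) ℝ) (hPi : Pi * S = A * Pi + P * L)
    (Pihat : Matrix (Fin n) (Fin ν) ℝ)
    (hPihat : Pihat * S = A * Pihat + B * (H * Piξ)) :
    Pix = Pi + Pihat ∧
    C * Pix + D * (H * Piξ) + Q * L =
      (C * Pi + Q * L) + (C * Pihat + D * (H * Piξ)) := by
  have hPix : Pix * S = A * Pix + (B * (H * Piξ) + P * L) := by
    rw [fromRows_mul, fromBlocks_mul_fromRows, fromRows_mul, fromRows_add_fromRows] at hcl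
    rw [(fromRows_inj hcl).1, Matrix.mul_assoc, add_assoc]
  have hsum : (Pi + Pihat) * S = A * (Pi + Pihat) + (B * (H * Piξ) + P * L) := by
    rw [Matrix.add_mul, hPi, hPihat, Matrix.mul_add]
    abel
  have hspec : Disjoint (spectrum ℂ (A.map Complex.ofRealHom))
      (spectrum ℂ (S.map Complex.ofRealHom)) :=
    Set.disjoint_left.2 fun μ hA hS => hdisj μ ⟨hA, hS⟩
  have hdecomp : Pix = Pi + Pihat :=
    eq_of_sylvester_of_disjoint_spectrum_map Complex.ofRealHom hspec hPix hsum
  refine ⟨hdecomp, ?_⟩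
  rw [hdecomp, Matrix.mul_add]
  abel
end

section
/- (Theorem 1) Assume the spectra of A and S are disjoint. Let M_des ∈ ℝ^{p×ν} be given, let (Π_x, Π_ξ) solve the closed-loop Sylvester equation, let Π solve ΠS = AΠ + PL, and let Π̂ solve Π̂S = AΠ̂ + B·(HΠ_ξ). Then the closed-loop moment satisfies M_cl = M_des if and only if the compensator moment M_c = HΠ_ξ satisfies T_S(M_c) = M_des − M_open, i.e., CΠ̂ + D·(HΠ_ξ) = M_des − (CΠ + QL). -/
/-!
Write `Π_x = Π + Π̂ + E`. The top block row of the closed-loop equation reads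
`Π_x S = AΠ_x + BHΠ_ξ + PL`; subtracting the equations of `Π` and `Π̂` leaves `ES = AE`.
If `XS = AX` then `X p(S) = p(A) X` for every polynomial `p`; taking `p = χ_A` kills the
right-hand side, while by spectral mapping `χ_A(S)` is invertible when `A` and `S` share no
eigenvalue. Hence `E = 0`, so `M_cl = CΠ̂ + DHΠ_ξ + M_open`, which is the claimed equivalence.
-/

open Matrix Polynomial

namespace Matrix

variable {R : Type*} [CommRing R] {m n : Type*} [Fintype m] [DecidableEq m] [Fintype n]
  [DecidableEq n]

theorem mul_aeval_eq_aeval_mul {A : Matrix m m R} {S : Matrix n n R} {X : Matrix m n R}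
    (hX : X * S = A * X) (p : R[X]) : X * aeval S p = aeval A p * X := by
  induction p using Polynomial.induction_on' with
  | add p q hp hq => rw [map_add, map_add, Matrix.mul_add, Matrix.add_mul, hp, hq]
  | monomial k c =>
    have hpow : X * S ^ k = A ^ k * X := by
      induction k with
      | zero => simp
      | succ k ih => rw [pow_succ, pow_succ, ← Matrix.mul_assoc, ih, Matrix.mul_assoc, hX,
          Matrix.mul_assoc]
    simp only [aeval_monomial, Algebra.algebraMap_eq_smul_one, smul_one_mul, Matrix.mul_smul,
      Matrix.smul_mul, hpow]

theorem eq_zero_of_mul_eq_mul_of_isUnit_aeval_charpoly {A : Matrix m m R} {S : Matrix n n R}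
    {X : Matrix m n R} (hX : X * S = A * X) (hA : IsUnit (aeval S A.charpoly)) : X = 0 := by
  have h := mul_aeval_eq_aeval_mul hX A.charpoly
  rw [aeval_self_charpoly, Matrix.zero_mul] at h
  calc X = X * aeval S A.charpoly * (↑hA.unit⁻¹ : Matrix n n R) := by
        rw [Matrix.mul_assoc, hA.mul_val_inv, Matrix.mul_one]
    _ = 0 := by rw [h, Matrix.zero_mul]

theorem isUnit_aeval_charpoly_of_disjoint_spectrum {K : Type*} [Field K] [IsAlgClosed K]
    {A : Matrix m m K} {S : Matrix n n K} (hAS : Disjoint (spectrum K A) (spectrum K S)) :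
    IsUnit (aeval S A.charpoly) := by
  nontriviality Matrix n n K
  by_contra hu
  have h0 := (spectrum.zero_mem_iff K).mpr hu
  rw [spectrum.map_polynomial_aeval_of_nonempty _ _
    (spectrum.nonempty_of_isAlgClosed_of_finiteDimensional K S)] at h0
  obtain ⟨μ, hμS, hμA⟩ := h0
  exact hAS.ne_of_mem (mem_spectrum_iff_isRoot_charpoly.mpr hμA) hμS rfl

theorem eq_zero_of_mul_eq_mul_of_disjoint_spectrum_map {K L : Type*} [Field K] [Field L]
    [IsAlgClosed L] (f : K →+* L) {A : Matrix m m K} {S : Matrix n n K} {X : Matrix m n K}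
    (hAS : Disjoint (spectrum L (A.map f)) (spectrum L (S.map f))) (hX : X * S = A * X) :
    X = 0 := by
  have hXf : X.map f * S.map f = A.map f * X.map f := by
    rw [← Matrix.map_mul, ← Matrix.map_mul, hX]
  refine map_injective f.injective ?_
  dsimp only
  rw [eq_zero_of_mul_eq_mul_of_isUnit_aeval_charpoly hXf
    (isUnit_aeval_charpoly_of_disjoint_spectrum hAS), Matrix.map_zero _ f.map_zero]

end Matrix

/-- **Theorem 1.** Assuming disjoint spectra of `A` and `S`, with `(Π_x, Π_ξ)`
solving the closed-loop Sylvester equation, `Π` solving `ΠS = AΠ + PL` and `Π̂` solving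
`Π̂S = AΠ̂ + B(HΠ_ξ)`, the closed-loop moment satisfies `M_cl = M_des` if and only if the
compensator moment `M_c = HΠ_ξ` satisfies `T_S(M_c) = M_des - M_open`. -/
theorem moment_assignment_iff (n m p q ν ρ : ℕ)
    (A : Matrix (Fin n) (Fin n) ℝ) (B : Matrix (Fin n) (Fin m) ℝ)
    (C : Matrix (Fin p) (Fin n) ℝ) (D : Matrix (Fin p) (Fin m) ℝ)
    (P : Matrix (Fin n) (Fin q) ℝ) (Q : Matrix (Fin p) (Fin q) ℝ)
    (S : Matrix (Fin ν) (Fin ν) ℝ) (L : Matrix (Fin q) (Fin ν) ℝ)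
    (F : Matrix (Fin ρ) (Fin ρ) ℝ) (G : Matrix (Fin ρ) (Fin p) ℝ)
    (H : Matrix (Fin m) (Fin ρ) ℝ)
    (Mdes : Matrix (Fin p) (Fin ν) ℝ)
    (hdisj : ∀ μ : ℂ, ¬(μ ∈ spectrum ℂ (A.map Complex.ofReal) ∧
      μ ∈ spectrum ℂ (S.map Complex.ofReal)))
    (Pix : Matrix (Fin n) (Fin ν) ℝ) (Piξ : Matrix (Fin ρ) (Fin ν) ℝ)
    (hcl : Matrix.fromRows Pix Piξ * S =
      Matrix.fromBlocks A (B * H) (G * C) (F + G * D * H) * Matrix.fromRows Pix Piξ +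
        Matrix.fromRows P (G * Q) * L)
    (Pi : Matrix (Fin n) (Fin ν) ℝ) (hPi : Pi * S = A * Pi + P * L)
    (Pihat : Matrix (Fin n) (Fin ν) ℝ)
    (hPihat : Pihat * S = A * Pihat + B * (H * Piξ)) :
    C * Pix + D * (H * Piξ) + Q * L = Mdes ↔
      C * Pihat + D * (H * Piξ) = Mdes - (C * Pi + Q * L) := by
  have hPix : Pix * S = A * Pix + B * H * Piξ + P * L := by
    ext i j
    simpa [fromBlocks_mul_fromRows, fromRows_mul] using congrFun₂ hcl (Sum.inl i) j
  have hE : (Pix - (Pi + Pihat)) * S = A * (Pix - (Pi + Pihat)) := by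
    rw [Matrix.sub_mul, Matrix.add_mul, hPix, hPi, hPihat, Matrix.mul_sub, Matrix.mul_add,
      Matrix.mul_assoc]
    abel
  have hspec : Disjoint (spectrum ℂ (A.map Complex.ofRealHom))
      (spectrum ℂ (S.map Complex.ofRealHom)) :=
    Set.disjoint_left.mpr fun μ hA hS => hdisj μ ⟨hA, hS⟩
  obtain rfl : Pix = Pi + Pihat :=
    sub_eq_zero.mp (eq_zero_of_mul_eq_mul_of_disjoint_spectrum_map Complex.ofRealHom hspec hE)
  rw [eq_sub_iff_add_eq, Matrix.mul_add]
  abel_nf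
end

section
/- (Theorem 3, first part) Assume the spectra of A and S are disjoint. Let M_des ∈ ℝ^{p×ν} and M_c ∈ ℝ^{m×ν} satisfy T_S(M_c) = M_des − M_open, and consider the canonical compensator (F, G, H) of order ρ ≥ ν determined by parameters (F_a, F_b, G_a, G_b, H_b). Let Π solve ΠS = AΠ + PL and Π̂ solve Π̂S = AΠ̂ + B·M_c. Then Π_x := Π + Π̂, Π_ξ := [I_ν; 0_{(ρ−ν)×ν}] solves the closed-loop Sylvester equation [Π_x; Π_ξ]S = A_cl[Π_x; Π_ξ] + P_cl·L; consequently the closed-loop moment of the compensator is HΠ_ξ = M_c and the closed-loop moment of the plant is CΠ_x + DHΠ_ξ + QL = M_des. -/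
open Matrix

/-!
Feeding the compensator state `Π_ξ = [I; 0]` through `H = [M_c, H_b]` gives `M_c`, so the plant
block of the closed-loop Sylvester equation is the sum of the equations of `Π` and `Π̂`, and the
plant output `CΠ_x + DM_c + QL` equals `M_des` by the moment condition. The compensator block then
reads `Π_ξ S = F Π_ξ + G M_des`, which holds because the first block column of `F` is
`[S - G_a M_des; -G_b M_des]`: the compensator contains a copy of the signal generator.
-/

namespace Matrix

variable {R : Type*} {l m₁ m₂ n o : Type*}

theorem fromRows_add [Add R] (A₁ B₁ : Matrix m₁ n R) (A₂ B₂ : Matrix m₂ n R) :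
    fromRows A₁ A₂ + fromRows B₁ B₂ = fromRows (A₁ + B₁) (A₂ + B₂) := by
  ext (_ | _) _ <;> rfl

variable [Ring R] [Fintype n] [Fintype o]

theorem fromCols_mul_fromRows_one_zero [DecidableEq n] (M : Matrix l n R) (N : Matrix l o R) :
    fromCols M N * fromRows (1 : Matrix n n R) (0 : Matrix o n R) = M := by
  rw [fromCols_mul_fromRows, Matrix.mul_one, Matrix.mul_zero, add_zero]

/-- The internal-model property of the canonical compensator. -/
theorem fromBlocks_mul_fromRows_one_zero_add [DecidableEq n] {p : Type*} [Fintype p]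
    (S : Matrix n n R) (M : Matrix p n R) (Fa : Matrix n o R) (Fb : Matrix o o R)
    (Ga : Matrix n p R) (Gb : Matrix o p R) :
    fromBlocks (S - Ga * M) Fa (-(Gb * M)) Fb * fromRows (1 : Matrix n n R) (0 : Matrix o n R)
      + fromRows Ga Gb * M = fromRows (1 : Matrix n n R) (0 : Matrix o n R) * S := by
  simp only [fromBlocks_mul_fromRows, fromRows_mul, fromRows_add, Matrix.mul_one,
    Matrix.mul_zero, Matrix.one_mul, Matrix.zero_mul, add_zero, sub_add_cancel, neg_add_cancel]

end Matrix

section ClosedLoop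

variable {R : Type*} [Ring R] {x u y w ν ξ : Type*} [Fintype x] [Fintype u] [Fintype y]
  [Fintype w] [Fintype ν] [Fintype ξ]

theorem sylvester_add {A : Matrix x x R} {S : Matrix ν ν R} {B₁ : Matrix x u R}
    {B₂ : Matrix x w R} {M₁ : Matrix u ν R} {M₂ : Matrix w ν R} {Pi₁ Pi₂ : Matrix x ν R}
    (h₁ : Pi₁ * S = A * Pi₁ + B₁ * M₁) (h₂ : Pi₂ * S = A * Pi₂ + B₂ * M₂) :
    (Pi₁ + Pi₂) * S = A * (Pi₁ + Pi₂) + B₁ * M₁ + B₂ * M₂ := by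
  rw [Matrix.add_mul, h₁, h₂, Matrix.mul_add]
  abel

theorem closedLoop_sylvester_iff (A : Matrix x x R) (B : Matrix x u R) (C : Matrix y x R)
    (D : Matrix y u R) (P : Matrix x w R) (Q : Matrix y w R) (S : Matrix ν ν R)
    (L : Matrix w ν R) (F : Matrix ξ ξ R) (G : Matrix ξ y R) (H : Matrix u ξ R)
    (Pix : Matrix x ν R) (Piξ : Matrix ξ ν R) :
    fromRows Pix Piξ * S =
        fromBlocks A (B * H) (G * C) (F + G * D * H) * fromRows Pix Piξ + fromRows P (G * Q) * L ↔
      Pix * S = A * Pix + B * (H * Piξ) + P * L ∧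
        Piξ * S = F * Piξ + G * (C * Pix + D * (H * Piξ) + Q * L) := by
  rw [fromRows_mul, fromBlocks_mul_fromRows, fromRows_mul, fromRows_add, fromRows_ext_iff]
  refine and_congr (Eq.congr_right ?_) (Eq.congr_right ?_)
  · rw [Matrix.mul_assoc]
  · simp only [Matrix.mul_add, Matrix.add_mul, Matrix.mul_assoc]
    abel

end ClosedLoop

theorem canonical_compensator_assigns_moment_general (n m p q ν ρ : ℕ)
    (A : Matrix (Fin n) (Fin n) ℝ) (B : Matrix (Fin n) (Fin m) ℝ)
    (C : Matrix (Fin p) (Fin n) ℝ) (D : Matrix (Fin p) (Fin m) ℝ)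
    (P : Matrix (Fin n) (Fin q) ℝ) (Q : Matrix (Fin p) (Fin q) ℝ)
    (S : Matrix (Fin ν) (Fin ν) ℝ) (L : Matrix (Fin q) (Fin ν) ℝ)
    (Mdes : Matrix (Fin p) (Fin ν) ℝ) (Mc : Matrix (Fin m) (Fin ν) ℝ)
    (Fa : Matrix (Fin ν) (Fin (ρ - ν)) ℝ) (Fb : Matrix (Fin (ρ - ν)) (Fin (ρ - ν)) ℝ)
    (Ga : Matrix (Fin ν) (Fin p) ℝ) (Gb : Matrix (Fin (ρ - ν)) (Fin p) ℝ)
    (Hb : Matrix (Fin m) (Fin (ρ - ν)) ℝ)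
    (Pi : Matrix (Fin n) (Fin ν) ℝ) (hPi : Pi * S = A * Pi + P * L)
    (Pihat : Matrix (Fin n) (Fin ν) ℝ) (hPihat : Pihat * S = A * Pihat + B * Mc)
    -- `T_S(M_c) = M_des - M_open`:
    (hMc : C * Pihat + D * Mc = Mdes - (C * Pi + Q * L)) :
    -- the canonical compensator `(F, G, H)`:
    (fun (F : Matrix (Fin ν ⊕ Fin (ρ - ν)) (Fin ν ⊕ Fin (ρ - ν)) ℝ)
         (G : Matrix (Fin ν ⊕ Fin (ρ - ν)) (Fin p) ℝ)
         (H : Matrix (Fin m) (Fin ν ⊕ Fin (ρ - ν)) ℝ) =>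
      -- with `Π_x := Π + Π̂` and `Π_ξ := [I_ν; 0]`:
      (fun (Pix : Matrix (Fin n) (Fin ν) ℝ)
           (Piξ : Matrix (Fin ν ⊕ Fin (ρ - ν)) (Fin ν) ℝ) =>
        -- `(Π_x, Π_ξ)` solves the closed-loop Sylvester equation,
        (Matrix.fromRows Pix Piξ * S =
          Matrix.fromBlocks A (B * H) (G * C) (F + G * D * H) * Matrix.fromRows Pix Piξ +
            Matrix.fromRows P (G * Q) * L) ∧
        -- the closed-loop moment of the compensator is `M_c`,
        H * Piξ = Mc ∧
        -- and the closed-loop moment of the plant is `M_des`: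
        C * Pix + D * (H * Piξ) + Q * L = Mdes)
        (Pi + Pihat)
        (Matrix.fromRows (1 : Matrix (Fin ν) (Fin ν) ℝ) (0 : Matrix (Fin (ρ - ν)) (Fin ν) ℝ)))
      (Matrix.fromBlocks (S - Ga * Mdes) Fa (-(Gb * Mdes)) Fb)
      (Matrix.fromRows Ga Gb)
      (Matrix.fromCols Mc Hb) := by
  have hH := fromCols_mul_fromRows_one_zero (n := Fin ν) Mc Hb
  have hy : C * (Pi + Pihat) + D * Mc + Q * L = Mdes := by
    rw [eq_sub_iff_add_eq] at hMc
    rw [← hMc, Matrix.mul_add]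
    abel
  refine ⟨(closedLoop_sylvester_iff ..).2 ⟨?_, ?_⟩, hH, by rw [hH, hy]⟩
  · rw [hH, add_right_comm, sylvester_add hPi hPihat]
  · rw [hH, hy, fromBlocks_mul_fromRows_one_zero_add]

/-- **Theorem 3, first part.** Assuming disjoint spectra of `A` and `S`, if
`M_c` satisfies `T_S(M_c) = M_des - M_open`, then for the canonical compensator of order
`ρ ≥ ν` (states indexed by `Fin ν ⊕ Fin (ρ-ν)`) determined by `(F_a, F_b, G_a, G_b, H_b)`,
the pair `Π_x := Π + Π̂`, `Π_ξ := [I_ν; 0]` solves the closed-loop Sylvester equation;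
consequently `HΠ_ξ = M_c` and `CΠ_x + DHΠ_ξ + QL = M_des`. -/
theorem canonical_compensator_assigns_moment (n m p q ν ρ : ℕ) (hρ : ν ≤ ρ)
    (A : Matrix (Fin n) (Fin n) ℝ) (B : Matrix (Fin n) (Fin m) ℝ)
    (C : Matrix (Fin p) (Fin n) ℝ) (D : Matrix (Fin p) (Fin m) ℝ)
    (P : Matrix (Fin n) (Fin q) ℝ) (Q : Matrix (Fin p) (Fin q) ℝ)
    (S : Matrix (Fin ν) (Fin ν) ℝ) (L : Matrix (Fin q) (Fin ν) ℝ)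
    (hdisj : ∀ μ : ℂ, ¬(μ ∈ spectrum ℂ (A.map Complex.ofReal) ∧
      μ ∈ spectrum ℂ (S.map Complex.ofReal)))
    (Mdes : Matrix (Fin p) (Fin ν) ℝ) (Mc : Matrix (Fin m) (Fin ν) ℝ)
    (Fa : Matrix (Fin ν) (Fin (ρ - ν)) ℝ) (Fb : Matrix (Fin (ρ - ν)) (Fin (ρ - ν)) ℝ)
    (Ga : Matrix (Fin ν) (Fin p) ℝ) (Gb : Matrix (Fin (ρ - ν)) (Fin p) ℝ)
    (Hb : Matrix (Fin m) (Fin (ρ - ν)) ℝ)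
    (Pi : Matrix (Fin n) (Fin ν) ℝ) (hPi : Pi * S = A * Pi + P * L)
    (Pihat : Matrix (Fin n) (Fin ν) ℝ) (hPihat : Pihat * S = A * Pihat + B * Mc)
    -- `T_S(M_c) = M_des - M_open`:
    (hMc : C * Pihat + D * Mc = Mdes - (C * Pi + Q * L)) :
    -- the canonical compensator `(F, G, H)`:
    (fun (F : Matrix (Fin ν ⊕ Fin (ρ - ν)) (Fin ν ⊕ Fin (ρ - ν)) ℝ)
         (G : Matrix (Fin ν ⊕ Fin (ρ - ν)) (Fin p) ℝ)
         (H : Matrix (Fin m) (Fin ν ⊕ Fin (ρ - ν)) ℝ) =>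
      -- with `Π_x := Π + Π̂` and `Π_ξ := [I_ν; 0]`:
      (fun (Pix : Matrix (Fin n) (Fin ν) ℝ)
           (Piξ : Matrix (Fin ν ⊕ Fin (ρ - ν)) (Fin ν) ℝ) =>
        -- `(Π_x, Π_ξ)` solves the closed-loop Sylvester equation,
        (Matrix.fromRows Pix Piξ * S =
          Matrix.fromBlocks A (B * H) (G * C) (F + G * D * H) * Matrix.fromRows Pix Piξ +
            Matrix.fromRows P (G * Q) * L) ∧
        -- the closed-loop moment of the compensator is `M_c`,
        H * Piξ = Mc ∧
        -- and the closed-loop moment of the plant is `M_des`: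
        C * Pix + D * (H * Piξ) + Q * L = Mdes)
        (Pi + Pihat)
        (Matrix.fromRows (1 : Matrix (Fin ν) (Fin ν) ℝ) (0 : Matrix (Fin (ρ - ν)) (Fin ν) ℝ)))
      (Matrix.fromBlocks (S - Ga * Mdes) Fa (-(Gb * Mdes)) Fb)
      (Matrix.fromRows Ga Gb)
      (Matrix.fromCols Mc Hb) :=
  canonical_compensator_assigns_moment_general n m p q ν ρ A B C D P Q S L Mdes Mc Fa Fb Ga Gb Hb Pi
    hPi Pihat hPihat hMc
end

section
/- (Jordan-block moment lemma, eq. (19)) Let s ∈ ℂ not be an eigenvalue of A, let r ≥ 1, and let J(s,r) ∈ ℂ^{r×r} be the Jordan block with eigenvalue s. If Π̃ ∈ ℂ^{n×r} and M̃ ∈ ℂ^{m×r} satisfy the Sylvester equation Π̃·J(s,r) = AΠ̃ + BM̃ (with A, B complexified), then CΠ̃ + DM̃ = Σ_{k=0}^{r−1} η_k(s)·M̃·(s·I_r − J(s,r))^k. -/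
open Matrix

/-- The `r × r` Jordan block with eigenvalue `s` (s on the diagonal, 1 on the
superdiagonal). -/
def jordanBlock (s : ℂ) (r : ℕ) : Matrix (Fin r) (Fin r) ℂ :=
  Matrix.of fun i j => if (i : ℕ) = (j : ℕ) then s
    else if (i : ℕ) + 1 = (j : ℕ) then 1 else 0

/-- The `k`-moment of `(A,B,C,D)` at `s`: `η_0(s) = C(sI-A)⁻¹B + D` and
`η_k(s) = C(sI-A)^{-(k+1)}B` for `k ≥ 1` (all matrices complexified). -/
noncomputable def kMoment {n m p : ℕ}
    (A : Matrix (Fin n) (Fin n) ℝ) (B : Matrix (Fin n) (Fin m) ℝ)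
    (C : Matrix (Fin p) (Fin n) ℝ) (D : Matrix (Fin p) (Fin m) ℝ)
    (s : ℂ) (k : ℕ) : Matrix (Fin p) (Fin m) ℂ :=
  if k = 0 then
    C.map Complex.ofReal * (s • (1 : Matrix (Fin n) (Fin n) ℂ) - A.map Complex.ofReal)⁻¹ *
      B.map Complex.ofReal + D.map Complex.ofReal
  else
    C.map Complex.ofReal *
      ((s • (1 : Matrix (Fin n) (Fin n) ℂ) - A.map Complex.ofReal)⁻¹) ^ (k + 1) *
      B.map Complex.ofReal

/-! With `E = sI - A`, invertible since `s` is not an eigenvalue, and `N = sI - J(s,r)`, which is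
strictly upper triangular and hence `N ^ r = 0`, the Sylvester equation becomes
`E Π̃ = Π̃ N + B M̃`, i.e. `Π̃ = E⁻¹ B M̃ + E⁻¹ Π̃ N`. Substituting this into itself `r` times
gives `Π̃ = ∑_{k<r} E^{-(k+1)} B M̃ N^k`; multiplying by `C` and adding `D M̃` (the `k = 0`
correction in `η_0`) yields the moment expansion. -/

open Finset

theorem Matrix.pow_apply_eq_zero_of_le_apply_eq_zero {R : Type*} [Semiring R] {r : ℕ}
    {M : Matrix (Fin r) (Fin r) R} (hM : ∀ i j, j ≤ i → M i j = 0) (k : ℕ) (i j : Fin r)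
    (hij : (j : ℕ) < i + k) : (M ^ k) i j = 0 := by
  induction k generalizing j with
  | zero => exact one_apply_ne (Fin.ne_of_gt (by simpa using hij))
  | succ k ih =>
    rw [pow_succ, mul_apply]
    refine sum_eq_zero fun l _ => ?_
    by_cases hl : (l : ℕ) < i + k
    · rw [ih l hl, zero_mul]
    · rw [hM l j (Fin.le_def.mpr (by omega)), mul_zero]

theorem Matrix.pow_card_eq_zero_of_le_apply_eq_zero {R : Type*} [Semiring R] {r : ℕ}
    {M : Matrix (Fin r) (Fin r) R} (hM : ∀ i j, j ≤ i → M i j = 0) : M ^ r = 0 := by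
  ext i j
  exact pow_apply_eq_zero_of_le_apply_eq_zero hM r i j (by omega)

theorem smul_one_sub_jordanBlock_apply_of_le (s : ℂ) {r : ℕ} {i j : Fin r} (hji : j ≤ i) :
    (s • (1 : Matrix (Fin r) (Fin r) ℂ) - jordanBlock s r) i j = 0 := by
  rcases hji.eq_or_lt with rfl | hlt
  · simp [jordanBlock]
  · have hne : (i : ℕ) ≠ j := by omega
    have hsucc : (i : ℕ) + 1 ≠ j := by omega
    simp [jordanBlock, hne, hsucc, Fin.ne_of_gt hlt]

theorem smul_one_sub_jordanBlock_pow_eq_zero (s : ℂ) (r : ℕ) :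
    (s • (1 : Matrix (Fin r) (Fin r) ℂ) - jordanBlock s r) ^ r = 0 :=
  pow_card_eq_zero_of_le_apply_eq_zero fun _ _ => smul_one_sub_jordanBlock_apply_of_le s

section Sylvester

variable {R : Type*} {m ι : Type*} [Fintype m] [DecidableEq m] [Fintype ι] [DecidableEq ι]

theorem smul_one_sub_mul_eq_of_mul_eq_mul_add [CommRing R] {s : R} {A : Matrix m m R}
    {J : Matrix ι ι R} {X Y : Matrix m ι R} (h : X * J = A * X + Y) :
    (s • 1 - A) * X = X * (s • 1 - J) + Y := by
  rw [Matrix.sub_mul, Matrix.mul_sub, h, Matrix.smul_mul, Matrix.mul_smul, Matrix.one_mul,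
    Matrix.mul_one]
  abel

variable [Semiring R] {E F : Matrix m m R} {N : Matrix ι ι R} {X Y : Matrix m ι R}

theorem eq_sum_add_of_mul_eq_mul_add (hF : F * E = 1) (h : E * X = X * N + Y) (j : ℕ) :
    X = ∑ k ∈ range j, F ^ (k + 1) * Y * N ^ k + F ^ j * X * N ^ j := by
  have hX : X = F * Y + F * X * N := by
    rw [Matrix.mul_assoc F X, ← Matrix.mul_add, add_comm, ← h, ← Matrix.mul_assoc, hF,
      Matrix.one_mul]
  induction j with
  | zero => simp
  | succ j ih =>
    have hstep : F ^ j * X * N ^ j =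
        F ^ (j + 1) * Y * N ^ j + F ^ (j + 1) * X * N ^ (j + 1) := by
      conv_lhs => rw [hX]
      simp only [Matrix.mul_add, Matrix.add_mul, pow_succ, (Commute.self_pow N j).eq,
        Matrix.mul_assoc]
    rw [sum_range_succ, add_assoc, ← hstep]
    exact ih

theorem eq_sum_of_mul_eq_mul_add_of_pow_eq_zero (hF : F * E = 1) (h : E * X = X * N + Y)
    {j : ℕ} (hN : N ^ j = 0) : X = ∑ k ∈ range j, F ^ (k + 1) * Y * N ^ k := by
  simpa [hN] using eq_sum_add_of_mul_eq_mul_add hF h j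

end Sylvester

theorem kMoment_eq {n m p : ℕ}
    (A : Matrix (Fin n) (Fin n) ℝ) (B : Matrix (Fin n) (Fin m) ℝ)
    (C : Matrix (Fin p) (Fin n) ℝ) (D : Matrix (Fin p) (Fin m) ℝ) (s : ℂ) (k : ℕ) :
    kMoment A B C D s k =
      C.map Complex.ofReal *
          (s • (1 : Matrix (Fin n) (Fin n) ℂ) - A.map Complex.ofReal)⁻¹ ^ (k + 1) *
          B.map Complex.ofReal +
        if k = 0 then D.map Complex.ofReal else 0 := by
  unfold kMoment
  split_ifs with hk
  · rw [hk, zero_add, pow_one]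
  · rw [add_zero]

/-- **Jordan-block moment lemma.** If `s` is not an eigenvalue of `A`, `r ≥ 1`,
and `Π̃ J(s,r) = AΠ̃ + BM̃`, then `CΠ̃ + DM̃ = Σ_{k=0}^{r-1} η_k(s) M̃ (sI_r - J(s,r))^k`. -/
theorem jordan_block_moment (n m p : ℕ)
    (A : Matrix (Fin n) (Fin n) ℝ) (B : Matrix (Fin n) (Fin m) ℝ)
    (C : Matrix (Fin p) (Fin n) ℝ) (D : Matrix (Fin p) (Fin m) ℝ)
    (s : ℂ) (hs : s ∉ spectrum ℂ (A.map Complex.ofReal))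
    (r : ℕ) (hr : 1 ≤ r)
    (Pit : Matrix (Fin n) (Fin r) ℂ) (Mt : Matrix (Fin m) (Fin r) ℂ)
    (hsyl : Pit * jordanBlock s r = A.map Complex.ofReal * Pit + B.map Complex.ofReal * Mt) :
    C.map Complex.ofReal * Pit + D.map Complex.ofReal * Mt =
      ∑ k ∈ Finset.range r,
        kMoment A B C D s k * Mt *
          (s • (1 : Matrix (Fin r) (Fin r) ℂ) - jordanBlock s r) ^ k := by
  have hdet : IsUnit (s • 1 - A.map Complex.ofReal).det := by
    rw [← isUnit_iff_isUnit_det, ← Algebra.algebraMap_eq_smul_one, ← spectrum.notMem_iff]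
    exact hs
  have hD : ∑ k ∈ range r, (if k = 0 then D.map Complex.ofReal else 0) * Mt *
      (s • (1 : Matrix (Fin r) (Fin r) ℂ) - jordanBlock s r) ^ k =
        D.map Complex.ofReal * Mt := by
    rw [sum_eq_single_of_mem 0 (mem_range.mpr hr), if_pos rfl, pow_zero, Matrix.mul_one]
    intro k _ hk
    rw [if_neg hk, Matrix.zero_mul, Matrix.zero_mul]
  rw [eq_sum_of_mul_eq_mul_add_of_pow_eq_zero (nonsing_inv_mul _ hdet)
    (smul_one_sub_mul_eq_of_mul_eq_mul_add hsyl) (smul_one_sub_jordanBlock_pow_eq_zero s r)]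
  simp only [kMoment_eq, Matrix.add_mul, sum_add_distrib, hD, Matrix.mul_sum]
  simp only [Matrix.mul_assoc]
end

section
/- (Theorem 2) Assume the spectra of A and S are disjoint, and suppose S = T^{−1}ΣT where T ∈ ℂ^{ν×ν} is invertible and Σ = blkdiag(J(s_1,ν_1), …, J(s_d,ν_d)) ∈ ℂ^{ν×ν} is block diagonal with Jordan blocks, ν = ν_1 + … + ν_d. For i = 1,…,d let E_i := blkdiag(0_{ν_1},…,0_{ν_{i−1}}, I_{ν_i}, 0_{ν_{i+1}},…,0_{ν_d}) and P_i := T^{−1}E_i T. Then for every M ∈ ℝ^{m×ν}, the (complexified) moment transfer operator satisfies T_S(M) = Σ_{i=1}^{d} Σ_{k=0}^{ν_i−1} η_k(s_i)·M·P_i·(s_i I_ν − S)^k·P_i. -/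
open Matrix

section AuxLemmas

variable {d : ℕ} {νs : Fin d → ℕ} {s : Fin d → ℂ}

/-- The block selector matrix `E_i`. -/
def blockE (νs : Fin d → ℕ) (i : Fin d) :
    Matrix ((j : Fin d) × Fin (νs j)) ((j : Fin d) × Fin (νs j)) ℂ :=
  Matrix.diagonal fun a => if a.1 = i then 1 else 0

/-- The nilpotent shift part of block `i`. -/
noncomputable def nsh (νs : Fin d → ℕ) (s : Fin d → ℂ) (i : Fin d) :
    Matrix ((j : Fin d) × Fin (νs j)) ((j : Fin d) × Fin (νs j)) ℂ :=
  blockDiagonal' (fun j => jordanBlock (s j) (νs j)) * blockE νs i - s i • blockE νs i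


lemma sum_blockE : ∑ i : Fin d, blockE νs i = 1 := by
  ext a b
  simp only [Finset.sum_apply, blockE, Matrix.sum_apply, Matrix.diagonal_apply]
  by_cases h : a = b
  · subst h
    simp [Finset.sum_ite_eq, Matrix.one_apply]
  · simp [h, Matrix.one_apply_ne h]

lemma blockE_mul_self (i : Fin d) : blockE νs i * blockE νs i = blockE νs i := by
  rw [blockE, Matrix.diagonal_mul_diagonal]
  refine congrArg Matrix.diagonal (funext fun a => ?_)
  by_cases h : a.1 = i <;> simp [h]

lemma blockDiagonal'_comm_blockE (M : ∀ j : Fin d, Matrix (Fin (νs j)) (Fin (νs j)) ℂ)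
    (i : Fin d) :
    blockDiagonal' M * blockE νs i = blockE νs i * blockDiagonal' M := by
  ext a b
  rw [blockE, Matrix.mul_diagonal, Matrix.diagonal_mul]
  rcases eq_or_ne a.1 b.1 with h | h
  · rw [h, mul_comm]
  · obtain ⟨a1, a2⟩ := a; obtain ⟨b1, b2⟩ := b
    rw [Matrix.blockDiagonal'_apply_ne _ _ _ h]
    ring


lemma nsh_support (i : Fin d) (a b : (j : Fin d) × Fin (νs j))
    (h : nsh νs s i a b ≠ 0) : a.1 = i ∧ b.1 = i ∧ (a.2 : ℕ) + 1 ≤ (b.2 : ℕ) := by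
  simp only [nsh, blockE, Matrix.sub_apply, Matrix.smul_apply, Matrix.mul_diagonal,
    Matrix.diagonal_apply, smul_eq_mul] at h
  by_cases hb : b.1 = i
  · simp only [hb, if_true, mul_one] at h
    by_cases hab : a = b
    · exfalso
      subst hab
      obtain ⟨a1, a2⟩ := a
      have hb' : a1 = i := hb
      subst hb'
      rw [Matrix.blockDiagonal'_apply_eq] at h
      simp [jordanBlock] at h
    · rw [if_neg hab, mul_zero, sub_zero] at h
      obtain ⟨a1, a2⟩ := a
      obtain ⟨b1, b2⟩ := b
      rcases eq_or_ne a1 b1 with h1 | h1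
      · subst h1
        rw [Matrix.blockDiagonal'_apply_eq] at h
        simp only [jordanBlock, Matrix.of_apply] at h
        have h2 : (a2 : ℕ) ≠ (b2 : ℕ) := by
          intro hv
          exact hab (by simp [Fin.ext_iff, hv])
        rw [if_neg h2] at h
        by_cases h3 : (a2 : ℕ) + 1 = (b2 : ℕ)
        · exact ⟨hb, hb, le_of_eq h3⟩
        · rw [if_neg h3] at h
          exact absurd rfl h
      · rw [Matrix.blockDiagonal'_apply_ne _ _ _ h1] at h
        exact absurd rfl h
  · exfalso
    apply h
    rw [if_neg hb, mul_zero, zero_sub, neg_eq_zero]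
    rcases eq_or_ne a b with hab | hab
    · rw [if_pos hab, hab, if_neg hb, mul_zero]
    · rw [if_neg hab, mul_zero]

lemma nsh_pow_support (i : Fin d) :
    ∀ (k : ℕ) (a b : (j : Fin d) × Fin (νs j)), (nsh νs s i ^ (k + 1)) a b ≠ 0 →
      a.1 = i ∧ b.1 = i ∧ (a.2 : ℕ) + (k + 1) ≤ (b.2 : ℕ) := by
  intro k
  induction k with
  | zero => intro a b h; rw [pow_one] at h; exact nsh_support i a b h
  | succ k ih =>
    intro a b h
    rw [pow_succ, Matrix.mul_apply] at h
    obtain ⟨c, hc⟩ := Finset.exists_ne_zero_of_sum_ne_zero h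
    have h1 := ih a c fun hz => hc.2 (by rw [hz, zero_mul])
    have h2 := nsh_support i c b fun hz => hc.2 (by rw [hz, mul_zero])
    exact ⟨h1.1, h2.2.1, by omega⟩

lemma nsh_pow_eq_zero (i : Fin d) (hν : 0 < νs i) : nsh νs s i ^ (νs i) = 0 := by
  obtain ⟨K, hK⟩ : ∃ K, νs i = K + 1 := ⟨νs i - 1, by omega⟩
  ext a b
  rw [Matrix.zero_apply]
  by_contra h
  rw [hK] at h
  obtain ⟨ha, hb, hle⟩ := nsh_pow_support i K a b h
  have := b.2.isLt
  have hbi : νs b.1 = νs i := by rw [hb]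
  omega

lemma blockE_mul_nsh (i : Fin d) : blockE νs i * nsh νs s i = nsh νs s i := by
  ext a b
  rw [blockE, Matrix.diagonal_mul]
  by_cases h : a.1 = i
  · simp [h]
  · have hz : nsh νs s i a b = 0 := by
      by_contra hn
      exact h (nsh_support i a b hn).1
    simp [h, hz]

lemma det_smul_one_sub_blockDiag (i : Fin d) (hν : 0 < νs i) :
    (s i • (1 : Matrix ((j : Fin d) × Fin (νs j)) ((j : Fin d) × Fin (νs j)) ℂ) -
      blockDiagonal' (fun j => jordanBlock (s j) (νs j))).det = 0 := by
  apply Matrix.det_eq_zero_of_column_eq_zero (⟨i, ⟨0, hν⟩⟩ : (j : Fin d) × Fin (νs j))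
  intro a
  rw [Matrix.sub_apply, Matrix.smul_apply, Matrix.one_apply, smul_eq_mul]
  by_cases hab : a = (⟨i, ⟨0, hν⟩⟩ : (j : Fin d) × Fin (νs j))
  · subst hab
    rw [if_pos rfl, Matrix.blockDiagonal'_apply_eq]
    simp [jordanBlock]
  · rw [if_neg hab, mul_zero]
    obtain ⟨a1, a2⟩ := a
    rcases eq_or_ne a1 i with h1 | h1
    · subst h1
      rw [Matrix.blockDiagonal'_apply_eq]
      have h2 : (a2 : ℕ) ≠ 0 := by
        intro hv
        exact hab (by simp [Fin.ext_iff, hv])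
      simp [jordanBlock, h2]
    · rw [Matrix.blockDiagonal'_apply_ne _ _ _ h1]
      ring

variable {κ : Type*} [Fintype κ] [DecidableEq κ]

lemma conjInvPow (T X : Matrix κ κ ℂ) (h1 : T⁻¹ * T = 1) (h2 : T * T⁻¹ = 1) (k : ℕ) :
    (T⁻¹ * X * T) ^ k = T⁻¹ * X ^ k * T := by
  induction k with
  | zero => rw [pow_zero, pow_zero, mul_one, h1]
  | succ k ih =>
    rw [pow_succ, ih, pow_succ]
    simp only [Matrix.mul_assoc]
    rw [← Matrix.mul_assoc T T⁻¹, h2, Matrix.one_mul]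

lemma unfold_rec {n' : ℕ} (R G : Matrix (Fin n') (Fin n') ℂ)
    (X Y : Matrix (Fin n') κ ℂ) (Nsh : Matrix κ κ ℂ) (ν : ℕ)
    (hRG : R * G = 1) (hGX : G * X = Y - X * Nsh) (hN : Nsh ^ ν = 0) :
    X = ∑ k ∈ Finset.range ν, ((-1 : ℂ) ^ k) • (R ^ (k + 1) * Y * Nsh ^ k) := by
  have hX : X = R * Y - R * (X * Nsh) := by
    have h := congrArg (fun Z => R * Z) hGX
    simp only [← Matrix.mul_assoc, hRG, Matrix.one_mul] at h
    rw [Matrix.mul_sub] at h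
    simpa [Matrix.mul_assoc] using h
  have key : ∀ K : ℕ, X = (∑ k ∈ Finset.range K, ((-1 : ℂ) ^ k) • (R ^ (k + 1) * Y * Nsh ^ k))
      + ((-1 : ℂ) ^ K) • (R ^ K * X * Nsh ^ K) := by
    intro K
    induction K with
    | zero => simp
    | succ K ih =>
      have hstep : R ^ K * X * Nsh ^ K =
          R ^ (K + 1) * Y * Nsh ^ K - R ^ (K + 1) * X * Nsh ^ (K + 1) := by
        conv_lhs => rw [hX]
        rw [pow_succ R K, pow_succ' Nsh K, Matrix.mul_sub, Matrix.sub_mul]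
        simp only [Matrix.mul_assoc]
      refine ih.trans ?_
      rw [hstep, smul_sub, Finset.sum_range_succ, pow_succ (-1 : ℂ) K, mul_neg_one, neg_smul,
        ← sub_eq_add_neg, add_sub_assoc]
  have h := key ν
  rwa [hN, Matrix.mul_zero, smul_zero, add_zero] at h

lemma map_ofReal_mul {a b c : Type*} [Fintype b] (M : Matrix a b ℝ) (N : Matrix b c ℝ) :
    (M * N).map Complex.ofReal = M.map Complex.ofReal * N.map Complex.ofReal := by
  ext i j
  simp [Matrix.mul_apply]

lemma map_ofReal_add {a b : Type*} (M N : Matrix a b ℝ) :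
    (M + N).map Complex.ofReal = M.map Complex.ofReal + N.map Complex.ofReal := by
  ext i j
  simp

lemma blockE_of_zero (i : Fin d) (h0 : νs i = 0) : blockE νs i = 0 := by
  ext a b
  have hai : a.1 ≠ i := by
    intro h
    have h1 := a.2.isLt
    have h2 : νs a.1 = 0 := by rw [h, h0]
    omega
  simp [blockE, Matrix.diagonal_apply, hai]

lemma blockE_pow (i : Fin d) (k : ℕ) (hk : k ≠ 0) : blockE νs i ^ k = blockE νs i := by
  induction k with
  | zero => exact absurd rfl hk
  | succ k ih =>
    rcases Nat.eq_zero_or_pos k with h | h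
    · rw [h, pow_one]
    · rw [pow_succ, ih (by omega), blockE_mul_self]

lemma blockE_mul_nsh_pow (i : Fin d) (k : ℕ) (hk : k ≠ 0) :
    blockE νs i * nsh νs s i ^ k = nsh νs s i ^ k := by
  obtain ⟨j, rfl⟩ : ∃ j, k = j + 1 := ⟨k - 1, by omega⟩
  rw [pow_succ' (nsh νs s i) j, ← Matrix.mul_assoc, blockE_mul_nsh]

lemma smul_one_sub_comm (i : Fin d) :
    (s i • (1 : Matrix ((j : Fin d) × Fin (νs j)) ((j : Fin d) × Fin (νs j)) ℂ) -
      blockDiagonal' (fun j => jordanBlock (s j) (νs j))) * blockE νs i =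
    blockE νs i * (s i • 1 - blockDiagonal' (fun j => jordanBlock (s j) (νs j))) := by
  rw [Matrix.sub_mul, Matrix.mul_sub, blockDiagonal'_comm_blockE]
  congr 1
  rw [Matrix.smul_mul, Matrix.mul_smul, Matrix.one_mul, Matrix.mul_one]

lemma smul_one_sub_mul_blockE (i : Fin d) :
    (s i • (1 : Matrix ((j : Fin d) × Fin (νs j)) ((j : Fin d) × Fin (νs j)) ℂ) -
      blockDiagonal' (fun j => jordanBlock (s j) (νs j))) * blockE νs i =
    -(nsh νs s i) := by
  rw [Matrix.sub_mul, Matrix.smul_mul, Matrix.one_mul, nsh, neg_sub]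

lemma E_Dm_pow (i : Fin d) (k : ℕ) :
    blockE νs i * (s i • (1 : Matrix ((j : Fin d) × Fin (νs j)) ((j : Fin d) × Fin (νs j)) ℂ) -
      blockDiagonal' (fun j => jordanBlock (s j) (νs j))) ^ k * blockE νs i =
    ((-1 : ℂ) ^ k) • (blockE νs i * nsh νs s i ^ k) := by
  rcases Nat.eq_zero_or_pos k with h0 | hk
  · subst h0
    simp [blockE_mul_self]
  · have hc : Commute
        (s i • (1 : Matrix ((j : Fin d) × Fin (νs j)) ((j : Fin d) × Fin (νs j)) ℂ) -
          blockDiagonal' (fun j => jordanBlock (s j) (νs j))) (blockE νs i) :=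
      smul_one_sub_comm i
    calc blockE νs i * (s i • 1 - blockDiagonal' (fun j => jordanBlock (s j) (νs j))) ^ k *
          blockE νs i
        = (s i • 1 - blockDiagonal' (fun j => jordanBlock (s j) (νs j))) ^ k *
            (blockE νs i * blockE νs i) := by
          rw [← (hc.pow_left k).eq, Matrix.mul_assoc]
      _ = (s i • 1 - blockDiagonal' (fun j => jordanBlock (s j) (νs j))) ^ k *
            blockE νs i ^ k := by
          rw [blockE_mul_self, blockE_pow i k (by omega)]
      _ = ((s i • 1 - blockDiagonal' (fun j => jordanBlock (s j) (νs j))) * blockE νs i) ^ k := by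
          rw [hc.mul_pow]
      _ = (-(nsh νs s i)) ^ k := by rw [smul_one_sub_mul_blockE]
      _ = ((-1 : ℂ) ^ k) • (nsh νs s i ^ k) := by
          rw [← neg_one_smul ℂ (nsh νs s i), smul_pow]
      _ = ((-1 : ℂ) ^ k) • (blockE νs i * nsh νs s i ^ k) := by
          rw [blockE_mul_nsh_pow i k (by omega)]

lemma per_block {n m p : ℕ}
    (A : Matrix (Fin n) (Fin n) ℝ) (B : Matrix (Fin n) (Fin m) ℝ)
    (C : Matrix (Fin p) (Fin n) ℝ) (D : Matrix (Fin p) (Fin m) ℝ)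
    (i : Fin d) (hν : 0 < νs i)
    (hA : IsUnit ((s i) • (1 : Matrix (Fin n) (Fin n) ℂ) - A.map Complex.ofReal).det)
    (Q : Matrix (Fin n) ((j : Fin d) × Fin (νs j)) ℂ)
    (N : Matrix (Fin m) ((j : Fin d) × Fin (νs j)) ℂ)
    (hSyl : Q * blockDiagonal' (fun j => jordanBlock (s j) (νs j)) =
      A.map Complex.ofReal * Q + B.map Complex.ofReal * N) :
    ∑ k ∈ Finset.range (νs i), kMoment A B C D (s i) k * N *
      (blockE νs i * ((s i) • (1 : Matrix ((j : Fin d) × Fin (νs j))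
        ((j : Fin d) × Fin (νs j)) ℂ) -
        blockDiagonal' (fun j => jordanBlock (s j) (νs j))) ^ k * blockE νs i) =
    C.map Complex.ofReal * (Q * blockE νs i) + D.map Complex.ofReal * (N * blockE νs i) := by
  set Ac := A.map Complex.ofReal with hAc
  set Bc := B.map Complex.ofReal with hBc
  set Cc := C.map Complex.ofReal with hCc
  set Dc := D.map Complex.ofReal with hDc
  set E := blockE νs i with hEdef
  set Nh := nsh νs s i with hNh
  set G := (s i) • (1 : Matrix (Fin n) (Fin n) ℂ) - Ac with hG
  set R := G⁻¹ with hR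
  have hRG : R * G = 1 := Matrix.nonsing_inv_mul _ hA
  -- Sylvester restricted to block i
  have h1 : Q * (blockDiagonal' (fun j => jordanBlock (s j) (νs j)) * E) =
      Ac * (Q * E) + Bc * (N * E) := by
    have h := congrArg (fun X => X * E) hSyl
    simpa only [Matrix.add_mul, Matrix.mul_assoc] using h
  have hSE : blockDiagonal' (fun j => jordanBlock (s j) (νs j)) * E = Nh + s i • E := by
    rw [hNh, nsh, ← hEdef, sub_add_cancel]
  have h2 : Q * (blockDiagonal' (fun j => jordanBlock (s j) (νs j)) * E) =
      (Q * E) * Nh + s i • (Q * E) := by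
    rw [hSE, Matrix.mul_add, Matrix.mul_smul]
    congr 1
    rw [hNh, hEdef, Matrix.mul_assoc, blockE_mul_nsh i]
  have hGX : G * (Q * E) = Bc * (N * E) - (Q * E) * Nh := by
    have h3 : Ac * (Q * E) + Bc * (N * E) = (Q * E) * Nh + s i • (Q * E) := h1 ▸ h2
    have h4 : Ac * (Q * E) = (Q * E) * Nh + s i • (Q * E) - Bc * (N * E) := by
      rw [← h3]; abel
    rw [hG, Matrix.sub_mul, Matrix.smul_mul, Matrix.one_mul, h4]
    abel
  have hQE : Q * E = ∑ k ∈ Finset.range (νs i),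
      ((-1 : ℂ) ^ k) • (R ^ (k + 1) * (Bc * (N * E)) * Nh ^ k) :=
    unfold_rec R G (Q * E) (Bc * (N * E)) Nh (νs i) hRG hGX (nsh_pow_eq_zero i hν)
  have hterm : ∀ k ∈ Finset.range (νs i),
      kMoment A B C D (s i) k * N * (E * ((s i) • (1 : Matrix ((j : Fin d) × Fin (νs j))
        ((j : Fin d) × Fin (νs j)) ℂ) -
        blockDiagonal' (fun j => jordanBlock (s j) (νs j))) ^ k * E) =
      ((-1 : ℂ) ^ k) • (Cc * (R ^ (k + 1) * (Bc * (N * E)) * Nh ^ k)) +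
        (if k = 0 then Dc * (N * E) else 0) := by
    intro k _
    rw [hEdef, E_Dm_pow i k, ← hEdef, ← hNh]
    rcases Nat.eq_zero_or_pos k with h0 | hk
    · subst h0
      simp only [kMoment, pow_zero, pow_one, one_smul, Matrix.mul_one,
        ← hAc, ← hBc, ← hCc, ← hDc, ← hG, ← hR]
      simp [Matrix.add_mul, Matrix.mul_assoc]
    · rw [if_neg (by omega), add_zero, kMoment, if_neg (by omega)]
      rw [← hAc, ← hBc, ← hCc, ← hG, ← hR]
      rw [Matrix.mul_smul]
      congr 1
      simp only [hNh, hEdef, Matrix.mul_assoc]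
  rw [Finset.sum_congr rfl hterm, Finset.sum_add_distrib]
  congr 1
  · rw [hQE, Matrix.mul_sum]
    simp only [Matrix.mul_smul]
  · rw [Finset.sum_ite_eq' (Finset.range (νs i)) 0 (fun _ => Dc * (N * E)),
      if_pos (Finset.mem_range.mpr hν)]

end AuxLemmas

/-- **Theorem 2.** Suppose the spectra of `A` and `S` are disjoint and
`S = T⁻¹ Σ T` with `T` invertible and `Σ = blkdiag(J(s_1,ν_1), …, J(s_d,ν_d))`; the index
set of `S` is `κ = Σ_{i} Fin ν_i` (so `ν = ν_1 + ⋯ + ν_d`). With the block selectors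
`E_i = blkdiag(0,…,I_{ν_i},…,0)` and projections `P_i = T⁻¹ E_i T`, the moment transfer
operator satisfies, for every `M ∈ ℝ^{m×ν}` with `Π_M S = AΠ_M + BM`,
`T_S(M) = Σ_{i=1}^{d} Σ_{k=0}^{ν_i-1} η_k(s_i) M P_i (s_i I_ν - S)^k P_i`. -/
theorem moment_transfer_operator_formula (n m p d : ℕ) (νs : Fin d → ℕ) (s : Fin d → ℂ)
    (A : Matrix (Fin n) (Fin n) ℝ) (B : Matrix (Fin n) (Fin m) ℝ)
    (C : Matrix (Fin p) (Fin n) ℝ) (D : Matrix (Fin p) (Fin m) ℝ)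
    (S : Matrix ((i : Fin d) × Fin (νs i)) ((i : Fin d) × Fin (νs i)) ℝ)
    (hdisj : ∀ μ : ℂ, ¬(μ ∈ spectrum ℂ (A.map Complex.ofReal) ∧
      μ ∈ spectrum ℂ (S.map Complex.ofReal)))
    (T : Matrix ((i : Fin d) × Fin (νs i)) ((i : Fin d) × Fin (νs i)) ℂ)
    (hT : IsUnit T.det)
    (hJordan : S.map Complex.ofReal =
      T⁻¹ * Matrix.blockDiagonal' (fun i => jordanBlock (s i) (νs i)) * T)
    (M : Matrix (Fin m) ((i : Fin d) × Fin (νs i)) ℝ)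
    (PiM : Matrix (Fin n) ((i : Fin d) × Fin (νs i)) ℝ)
    (hPiM : PiM * S = A * PiM + B * M) :
    (C * PiM + D * M).map Complex.ofReal =
      ∑ i : Fin d, ∑ k ∈ Finset.range (νs i),
        kMoment A B C D (s i) k * M.map Complex.ofReal *
          (T⁻¹ * Matrix.diagonal (fun a : (i : Fin d) × Fin (νs i) =>
            if a.1 = i then (1 : ℂ) else 0) * T) *
          ((s i) • (1 : Matrix ((i : Fin d) × Fin (νs i)) ((i : Fin d) × Fin (νs i)) ℂ) -
            S.map Complex.ofReal) ^ k *
          (T⁻¹ * Matrix.diagonal (fun a : (i : Fin d) × Fin (νs i) =>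
            if a.1 = i then (1 : ℂ) else 0) * T) := by
  classical
  have hEd : ∀ i : Fin d, Matrix.diagonal
      (fun a : (j : Fin d) × Fin (νs j) => if a.1 = i then (1 : ℂ) else 0) = blockE νs i :=
    fun i => rfl
  simp only [hEd]
  have hT1 : T⁻¹ * T = 1 := Matrix.nonsing_inv_mul T hT
  have hT2 : T * T⁻¹ = 1 := Matrix.mul_nonsing_inv T hT
  have hTT : ∀ (X : Matrix ((i : Fin d) × Fin (νs i)) ((i : Fin d) × Fin (νs i)) ℂ),
      T * (T⁻¹ * X) = X := fun X => by rw [← Matrix.mul_assoc, hT2, Matrix.one_mul]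
  have hSylC : PiM.map Complex.ofReal * S.map Complex.ofReal =
      A.map Complex.ofReal * PiM.map Complex.ofReal +
        B.map Complex.ofReal * M.map Complex.ofReal := by
    have h := congrArg (fun X : Matrix (Fin n) ((i : Fin d) × Fin (νs i)) ℝ =>
      X.map Complex.ofReal) hPiM
    simpa only [map_ofReal_mul, map_ofReal_add] using h
  set Q := PiM.map Complex.ofReal * T⁻¹ with hQ
  set N := M.map Complex.ofReal * T⁻¹ with hN
  have hQT : Q * T = PiM.map Complex.ofReal := by
    rw [hQ, Matrix.mul_assoc, hT1, Matrix.mul_one]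
  have hNT : N * T = M.map Complex.ofReal := by
    rw [hN, Matrix.mul_assoc, hT1, Matrix.mul_one]
  have hSylQ : Q * blockDiagonal' (fun j => jordanBlock (s j) (νs j)) =
      A.map Complex.ofReal * Q + B.map Complex.ofReal * N := by
    calc Q * blockDiagonal' (fun j => jordanBlock (s j) (νs j))
        = PiM.map Complex.ofReal * S.map Complex.ofReal * T⁻¹ := by
          rw [hJordan, hQ]
          simp only [Matrix.mul_assoc, hTT]
          rw [hT2, Matrix.mul_one]
      _ = (A.map Complex.ofReal * PiM.map Complex.ofReal +
            B.map Complex.ofReal * M.map Complex.ofReal) * T⁻¹ := by rw [hSylC]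
      _ = A.map Complex.ofReal * Q + B.map Complex.ofReal * N := by
          rw [Matrix.add_mul, hQ, hN, Matrix.mul_assoc, Matrix.mul_assoc]
  have hconj : ∀ i : Fin d,
      (s i) • (1 : Matrix ((i : Fin d) × Fin (νs i)) ((i : Fin d) × Fin (νs i)) ℂ) -
        S.map Complex.ofReal =
      T⁻¹ * ((s i) • 1 - blockDiagonal' (fun j => jordanBlock (s j) (νs j))) * T := by
    intro i
    rw [hJordan, Matrix.mul_sub, Matrix.sub_mul, Matrix.mul_smul, Matrix.mul_one,
      Matrix.smul_mul, hT1]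
  have hA : ∀ i : Fin d, 0 < νs i →
      IsUnit ((s i) • (1 : Matrix (Fin n) (Fin n) ℂ) - A.map Complex.ofReal).det := by
    intro i hν
    have hdet : ((s i) • (1 : Matrix ((i : Fin d) × Fin (νs i)) ((i : Fin d) × Fin (νs i)) ℂ) -
        S.map Complex.ofReal).det = 0 := by
      rw [hconj i, Matrix.det_mul, Matrix.det_mul, det_smul_one_sub_blockDiag i hν]
      ring
    have hspecS : s i ∈ spectrum ℂ (S.map Complex.ofReal) := by
      rw [spectrum.mem_iff, Algebra.algebraMap_eq_smul_one]
      intro hU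
      have h := (Matrix.isUnit_iff_isUnit_det _).mp hU
      rw [hdet] at h
      exact not_isUnit_zero h
    have hnot : s i ∉ spectrum ℂ (A.map Complex.ofReal) := fun h => hdisj (s i) ⟨h, hspecS⟩
    have h2 := spectrum.notMem_iff.mp hnot
    rw [Algebra.algebraMap_eq_smul_one] at h2
    exact (Matrix.isUnit_iff_isUnit_det _).mp h2
  calc (C * PiM + D * M).map Complex.ofReal
      = C.map Complex.ofReal * PiM.map Complex.ofReal +
          D.map Complex.ofReal * M.map Complex.ofReal := by
        rw [map_ofReal_add, map_ofReal_mul, map_ofReal_mul]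
    _ = (C.map Complex.ofReal * Q + D.map Complex.ofReal * N) * T := by
        rw [hQ, hN, Matrix.add_mul]
        simp only [Matrix.mul_assoc, hT1, Matrix.mul_one]
    _ = (∑ i : Fin d, (C.map Complex.ofReal * (Q * blockE νs i) +
          D.map Complex.ofReal * (N * blockE νs i))) * T := by
        congr 1
        rw [Finset.sum_add_distrib, ← Matrix.mul_sum, ← Matrix.mul_sum,
          ← Matrix.mul_sum, ← Matrix.mul_sum, sum_blockE, Matrix.mul_one, Matrix.mul_one]
    _ = ∑ i : Fin d, (∑ k ∈ Finset.range (νs i), kMoment A B C D (s i) k * N *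
          (blockE νs i * ((s i) • (1 : Matrix ((i : Fin d) × Fin (νs i))
            ((i : Fin d) × Fin (νs i)) ℂ) -
            blockDiagonal' (fun j => jordanBlock (s j) (νs j))) ^ k * blockE νs i)) * T := by
        rw [Matrix.sum_mul]
        refine Finset.sum_congr rfl fun i _ => ?_
        congr 1
        rcases Nat.eq_zero_or_pos (νs i) with h0 | hν
        · rw [blockE_of_zero i h0, h0]
          simp
        · exact (per_block A B C D i hν (hA i hν) Q N hSylQ).symm
    _ = ∑ i : Fin d, ∑ k ∈ Finset.range (νs i),
          kMoment A B C D (s i) k * M.map Complex.ofReal *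
            (T⁻¹ * blockE νs i * T) *
            ((s i) • (1 : Matrix ((i : Fin d) × Fin (νs i)) ((i : Fin d) × Fin (νs i)) ℂ) -
              S.map Complex.ofReal) ^ k *
            (T⁻¹ * blockE νs i * T) := by
        refine Finset.sum_congr rfl fun i _ => ?_
        rw [Matrix.sum_mul]
        refine Finset.sum_congr rfl fun k hk => ?_
        rw [hconj i, conjInvPow T _ hT1 hT2, ← hNT]
        simp only [Matrix.mul_assoc, hTT]
end

section
/- (Surjectivity of the moment transfer operator) Under the hypotheses of Theorem 2 (spectra of A and S disjoint, S = T^{−1}ΣT with T ∈ ℂ^{ν×ν} invertible and Σ = blkdiag(J(s_1,ν_1),…,J(s_d,ν_d))), assume that for every i ∈ {1,…,d} the 0-moment η_0(s_i) = C(s_i I_n − A)^{−1}B + D ∈ ℂ^{p×m} has rank p (full row rank, i.e., the plant is right-invertible at every eigenvalue of S). Then the moment transfer operator T_S : ℝ^{m×ν} → ℝ^{p×ν} is surjective; in particular, for every M_des ∈ ℝ^{p×ν} and every M_open ∈ ℝ^{p×ν} there exists M_c ∈ ℝ^{m×ν} with T_S(M_c) = M_des − M_open. -/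
/-!
Conjugating by `T` reduces the problem to the Jordan form `Σ`, whose block-diagonal structure
decouples the equations `Π Σ = A Π + B M`, `C Π + D M = G` into one problem per block
`J(s, r) = s + N` with `N` nilpotent. For a single block, `E = s - A` is invertible because
`s ∈ spec S` and the spectra are disjoint, and a right inverse `Q` of `η₀(s)` lets one take
`M = Q (G + C E⁻¹ Π N)`; the equations then become a fixed-point equation `Π = X + K Π N`,
solved by the finite series `∑ Kᵏ X Nᵏ`. Since `A, B, C, D, S` are real, the real parts of a
complex solution solve the real problem.
-/

open Matrix

namespace Matrix

variable {ι F R : Type*} [Fintype ι] [DecidableEq ι]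

theorem exists_mul_eq_one_of_rank_eq [Field F] {m : Type*} [Fintype m] [DecidableEq m]
    {M : Matrix ι m F} (h : M.rank = Fintype.card ι) : ∃ N : Matrix m ι F, M * N = 1 := by
  refine mulVec_surjective_iff_exists_right_inverse.mp
    (LinearMap.range_eq_top (f := M.mulVecLin).mp ?_)
  exact Submodule.eq_top_of_finrank_eq (by rw [← rank, h, Module.finrank_fintype_fun_eq_card])

theorem isNilpotent_of_isUpperTriangular [CommRing R] [LinearOrder ι] {M : Matrix ι ι R}
    (h : M.IsUpperTriangular) (hdiag : ∀ i, M i i = 0) : IsNilpotent M := by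
  refine ⟨Fintype.card ι, ?_⟩
  simpa [charpoly_of_isUpperTriangular M h, hdiag] using aeval_self_charpoly M

theorem spectrum_nonsing_inv_mul_mul [CommRing R] {M T : Matrix ι ι R} (hT : IsUnit T.det) :
    spectrum R (T⁻¹ * M * T) = spectrum R M := by
  obtain ⟨u, rfl⟩ := (isUnit_iff_isUnit_det T).mpr hT
  rw [← coe_units_inv, spectrum.units_conjugate']

theorem mem_spectrum_of_mulVec_eq_smul [Field F] {M : Matrix ι ι F} {v : ι → F} {s : F}
    (hv : v ≠ 0) (h : M *ᵥ v = s • v) : s ∈ spectrum F M := by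
  rw [← spectrum_toLin']
  exact (Module.End.hasEigenvalue_of_hasEigenvector
    ⟨Module.End.mem_eigenspace_iff.mpr h, hv⟩).mem_spectrum

theorem blockDiagonal'_mulVec_single_one [CommRing R] {o : Type*} [Fintype o] [DecidableEq o]
    {ν : o → Type*} [∀ i, Fintype (ν i)] [∀ i, DecidableEq (ν i)]
    {J : ∀ i, Matrix (ν i) (ν i) R} {s : R} {i : o} {j : ν i}
    (h : J i *ᵥ Pi.single j 1 = s • Pi.single j 1) :
    blockDiagonal' J *ᵥ Pi.single ⟨i, j⟩ 1 = s • Pi.single ⟨i, j⟩ 1 := by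
  ext ⟨i', j'⟩
  have hj' := congrFun h
  simp only [mulVec_single_one, col_apply, blockDiagonal'_apply] at hj' ⊢
  by_cases hi : i' = i
  · subst hi
    simpa [Pi.single_apply] using hj' j'
  · simp [hi]

theorem exists_eq_add_mul_mul_of_isNilpotent [Ring R] {n : Type*} [Fintype n] [DecidableEq n]
    (X : Matrix n ι R) (K : Matrix n n R) {N : Matrix ι ι R} (hN : IsNilpotent N) :
    ∃ P : Matrix n ι R, P = X + K * P * N := by
  obtain ⟨r, hr⟩ := hN
  refine ⟨∑ k ∈ Finset.range r, K ^ k * X * N ^ k, ?_⟩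
  rw [Matrix.mul_sum, Matrix.sum_mul]
  calc ∑ k ∈ Finset.range r, K ^ k * X * N ^ k
      = ∑ k ∈ Finset.range (r + 1), K ^ k * X * N ^ k := by
        simp [Finset.sum_range_succ, hr]
    _ = X + ∑ k ∈ Finset.range r, K * (K ^ k * X * N ^ k) * N := by
        rw [Finset.sum_range_succ', pow_zero, pow_zero, Matrix.one_mul, Matrix.mul_one, add_comm]
        congr 1
        refine Finset.sum_congr rfl fun k _ => ?_
        rw [pow_succ' K k, pow_succ N k]
        simp only [Matrix.mul_assoc]

theorem map_re_mul_map_ofReal {l o q : Type*} [Fintype o] (X : Matrix l o ℂ)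
    (Y : Matrix o q ℝ) : (X * Y.map Complex.ofReal).map Complex.re = X.map Complex.re * Y := by
  ext
  simp [mul_apply, Complex.re_sum]

theorem map_re_map_ofReal_mul {l o q : Type*} [Fintype o] (Y : Matrix l o ℝ)
    (X : Matrix o q ℂ) : (Y.map Complex.ofReal * X).map Complex.re = Y * X.map Complex.re := by
  ext
  simp [mul_apply, Complex.re_sum]

end Matrix

variable {R : Type*} [CommRing R] {n m p ι : Type*} [Fintype n] [Fintype m] [Fintype ι]

/-- The moment transfer operator `T_S(M) = C Π_M + D M` is onto. The Sylvester solution `Π_M`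
is quantified existentially; it is unique when the spectra of `A` and `S` are disjoint. -/
def MomentSurjective (A : Matrix n n R) (B : Matrix n m R) (C : Matrix p n R)
    (D : Matrix p m R) (S : Matrix ι ι R) : Prop :=
  ∀ N : Matrix p ι R, ∃ (M : Matrix m ι R) (P : Matrix n ι R),
    P * S = A * P + B * M ∧ C * P + D * M = N

namespace MomentSurjective

variable {A : Matrix n n R} {B : Matrix n m R} {C : Matrix p n R} {D : Matrix p m R}

theorem of_isEmpty [IsEmpty ι] (S : Matrix ι ι R) : MomentSurjective A B C D S :=
  fun _ => ⟨0, 0, Subsingleton.elim _ _, Subsingleton.elim _ _⟩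

theorem of_isNilpotent_sub [Fintype p] [DecidableEq n] [DecidableEq p] [DecidableEq ι] {s : R}
    {S : Matrix ι ι R} (hE : IsUnit (s • 1 - A).det)
    (hη : ∃ Q : Matrix m p R, (C * (s • 1 - A)⁻¹ * B + D) * Q = 1)
    (hS : IsNilpotent (S - s • 1)) : MomentSurjective A B C D S := by
  intro G
  obtain ⟨Q, hQ⟩ := hη
  -- With `E = s - A` and `N = S - s`, the equations read `E P + P N = B M`, `C P + D M = G`;
  -- the choice of `M` below reduces them to the fixed-point equation `hP`.
  set E := s • (1 : Matrix n n R) - A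
  set N := S - s • 1
  obtain ⟨P, hP⟩ := Matrix.exists_eq_add_mul_mul_of_isNilpotent (E⁻¹ * B * Q * G)
    (E⁻¹ * (B * Q * C * E⁻¹ - 1)) hS
  set M := Q * (G + C * E⁻¹ * P * N)
  have hEP : E * P = B * M - P * N :=
    calc E * P = E * (E⁻¹ * B * Q * G + E⁻¹ * (B * Q * C * E⁻¹ - 1) * P * N) := by
          rw [← hP]
      _ = B * Q * G + (B * Q * C * E⁻¹ - 1) * P * N := by
        simp only [Matrix.mul_add, Matrix.mul_assoc, mul_nonsing_inv_cancel_left _ _ hE]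
      _ = B * M - P * N := by
        simp only [M, Matrix.mul_add, Matrix.sub_mul, Matrix.one_mul, Matrix.mul_assoc]
        abel
  refine ⟨M, P, ?_, ?_⟩
  · have hS' : S = s • 1 + N := by simp [N]
    have hA : A = s • 1 - E := by simp [E]
    rw [hS', hA, Matrix.mul_add, Matrix.sub_mul, hEP]
    simp only [Matrix.mul_smul, Matrix.smul_mul, Matrix.mul_one, Matrix.one_mul]
    abel
  · have hCP : C * P = C * E⁻¹ * (B * M - P * N) := by
      rw [← hEP, Matrix.mul_assoc, nonsing_inv_mul_cancel_left _ _ hE]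
    calc C * P + D * M = (C * E⁻¹ * B + D) * M - C * E⁻¹ * P * N := by
          rw [hCP]
          simp only [Matrix.mul_sub, Matrix.add_mul, Matrix.mul_assoc]
          abel
      _ = G := by
        rw [← Matrix.mul_assoc _ Q, hQ, Matrix.one_mul, add_sub_cancel_right]

theorem blockDiagonal' {o : Type*} [Fintype o] [DecidableEq o] {ν : o → Type*}
    [∀ i, Fintype (ν i)] {S : ∀ i, Matrix (ν i) (ν i) R}
    (h : ∀ i, MomentSurjective A B C D (S i)) : MomentSurjective A B C D (blockDiagonal' S) := by
  intro G
  choose M P hSylv hOut using fun i => h i fun k j => G k ⟨i, j⟩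
  refine ⟨of fun k c => M c.1 k c.2, of fun k c => P c.1 k c.2, ?_, ?_⟩
  · ext k ⟨i, j⟩
    simpa [mul_apply, blockDiagonal'_apply, Fintype.sum_sigma] using
      congrFun (congrFun (hSylv i) k) j
  · ext k ⟨i, j⟩
    simpa [mul_apply, Fintype.sum_sigma] using congrFun (congrFun (hOut i) k) j

theorem nonsing_inv_mul_mul [DecidableEq ι] {S T : Matrix ι ι R} (h : MomentSurjective A B C D S)
    (hT : IsUnit T.det) : MomentSurjective A B C D (T⁻¹ * S * T) := by
  intro G
  obtain ⟨M, P, hSylv, hOut⟩ := h (G * T⁻¹)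
  refine ⟨M * T, P * T, ?_, ?_⟩
  · rw [← Matrix.mul_assoc, Matrix.mul_assoc P, mul_nonsing_inv_cancel_left _ _ hT, hSylv]
    simp only [Matrix.add_mul, Matrix.mul_assoc]
  · rw [← Matrix.mul_assoc, ← Matrix.mul_assoc, ← Matrix.add_mul, hOut,
      nonsing_inv_mul_cancel_right _ _ hT]

end MomentSurjective

theorem MomentSurjective.of_map_ofReal {A : Matrix n n ℝ} {B : Matrix n m ℝ} {C : Matrix p n ℝ} {D : Matrix p m ℝ}
    {S : Matrix ι ι ℝ}
    (h : MomentSurjective (A.map Complex.ofReal) (B.map Complex.ofReal) (C.map Complex.ofReal)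
      (D.map Complex.ofReal) (S.map Complex.ofReal)) : MomentSurjective A B C D S := by
  intro G
  obtain ⟨M, P, hSylv, hOut⟩ := h (G.map Complex.ofReal)
  refine ⟨M.map Complex.re, P.map Complex.re, ?_, ?_⟩
  · simpa [Matrix.map_add _ Complex.add_re, map_re_mul_map_ofReal, map_re_map_ofReal_mul]
      using congrArg (map · Complex.re) hSylv
  · simpa [Matrix.map_add _ Complex.add_re, map_re_map_ofReal_mul, Function.comp_def]
      using congrArg (map · Complex.re) hOut

theorem isNilpotent_jordanBlock_sub_smul_one (s : ℂ) (r : ℕ) :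
    IsNilpotent (jordanBlock s r - s • 1) := by
  refine isNilpotent_of_isUpperTriangular (fun i j hji => ?_) fun i => by simp [jordanBlock]
  have hji : (j : ℕ) < i := hji
  have hne : (i : ℕ) ≠ j := by omega
  have hne' : (i : ℕ) + 1 ≠ j := by omega
  simp [jordanBlock, one_apply, hne, hne', Fin.ext_iff]

theorem jordanBlock_mulVec_single_zero (s : ℂ) {r : ℕ} (hr : 0 < r) :
    jordanBlock s r *ᵥ Pi.single ⟨0, hr⟩ 1 = s • Pi.single ⟨0, hr⟩ 1 := by
  ext i
  simp [jordanBlock, Pi.single_apply, Fin.ext_iff]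

/-- **surjectivity of the moment transfer operator.** Under the hypotheses of
Theorem 2 (spectra of `A` and `S` disjoint, `S = T⁻¹ Σ T` with `Σ` in Jordan form), if for
every `i` the 0-moment `η_0(s_i) = C(s_i I - A)⁻¹B + D` has full row rank `p`, then the
moment transfer operator `T_S : ℝ^{m×ν} → ℝ^{p×ν}` is surjective; in particular for all
`M_des, M_open ∈ ℝ^{p×ν}` there exists `M_c` with `T_S(M_c) = M_des - M_open`. -/
theorem moment_transfer_operator_surjective
    (n m p d : ℕ) (νs : Fin d → ℕ) (s : Fin d → ℂ)
    (A : Matrix (Fin n) (Fin n) ℝ) (B : Matrix (Fin n) (Fin m) ℝ)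
    (C : Matrix (Fin p) (Fin n) ℝ) (D : Matrix (Fin p) (Fin m) ℝ)
    (S : Matrix ((i : Fin d) × Fin (νs i)) ((i : Fin d) × Fin (νs i)) ℝ)
    (hdisj : ∀ μ : ℂ, ¬(μ ∈ spectrum ℂ (A.map Complex.ofReal) ∧
      μ ∈ spectrum ℂ (S.map Complex.ofReal)))
    (T : Matrix ((i : Fin d) × Fin (νs i)) ((i : Fin d) × Fin (νs i)) ℂ)
    (hT : IsUnit T.det)
    (hJordan : S.map Complex.ofReal =
      T⁻¹ * Matrix.blockDiagonal' (fun i => jordanBlock (s i) (νs i)) * T)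
    (hrank : ∀ i : Fin d,
      (C.map Complex.ofReal *
        ((s i) • (1 : Matrix (Fin n) (Fin n) ℂ) - A.map Complex.ofReal)⁻¹ *
        B.map Complex.ofReal + D.map Complex.ofReal).rank = p) :
    -- surjectivity of `T_S`:
    (∀ N : Matrix (Fin p) ((i : Fin d) × Fin (νs i)) ℝ,
      ∃ (Mc : Matrix (Fin m) ((i : Fin d) × Fin (νs i)) ℝ)
        (PiM : Matrix (Fin n) ((i : Fin d) × Fin (νs i)) ℝ),
        PiM * S = A * PiM + B * Mc ∧ C * PiM + D * Mc = N) ∧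
    -- in particular:
    (∀ Mdes Mopen : Matrix (Fin p) ((i : Fin d) × Fin (νs i)) ℝ,
      ∃ (Mc : Matrix (Fin m) ((i : Fin d) × Fin (νs i)) ℝ)
        (PiM : Matrix (Fin n) ((i : Fin d) × Fin (νs i)) ℝ),
        PiM * S = A * PiM + B * Mc ∧ C * PiM + D * Mc = Mdes - Mopen) := by
  have hblock : ∀ i, MomentSurjective (A.map Complex.ofReal) (B.map Complex.ofReal)
      (C.map Complex.ofReal) (D.map Complex.ofReal) (jordanBlock (s i) (νs i)) := by
    intro i
    rcases Nat.eq_zero_or_pos (νs i) with hempty | hpos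
    · have : IsEmpty (Fin (νs i)) := by rw [hempty]; infer_instance
      exact .of_isEmpty _
    have hS : s i ∈ spectrum ℂ (S.map Complex.ofReal) := by
      rw [hJordan, spectrum_nonsing_inv_mul_mul hT]
      exact mem_spectrum_of_mulVec_eq_smul (Pi.single_ne_zero_iff.mpr one_ne_zero)
        (blockDiagonal'_mulVec_single_one (jordanBlock_mulVec_single_zero (s i) hpos))
    have hE : IsUnit ((s i) • (1 : Matrix (Fin n) (Fin n) ℂ) - A.map Complex.ofReal).det := by
      by_contra hE
      refine hdisj (s i) ⟨?_, hS⟩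
      rwa [spectrum.mem_iff, Algebra.algebraMap_eq_smul_one, isUnit_iff_isUnit_det]
    exact .of_isNilpotent_sub hE (exists_mul_eq_one_of_rank_eq (by simpa using hrank i))
      (isNilpotent_jordanBlock_sub_smul_one (s i) (νs i))
  have key : MomentSurjective A B C D S :=
    .of_map_ofReal (hJordan ▸ (MomentSurjective.blockDiagonal' hblock).nonsing_inv_mul_mul hT)
  exact ⟨key, fun Mdes Mopen => key (Mdes - Mopen)⟩
end

section
/- (Lemma 1) Let M_des ∈ ℝ^{p×ν}, M_c ∈ ℝ^{m×ν}, and G_a ∈ ℝ^{ν×p} be arbitrary, and define the augmented pair A_aug := [[A, B·M_c],[G_a·C, S − G_a·(M_des − D·M_c)]] ∈ ℝ^{(n+ν)×(n+ν)}, B_aug := [[B, 0_{n×ν}],[G_a·D, I_ν]] ∈ ℝ^{(n+ν)×(m+ν)}. Then (A_aug, B_aug) is PBH-stabilizable if and only if (A, B) is PBH-stabilizable. -/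
/-!
Full row rank of a matrix means its left kernel is trivial. Let `(w, v)` be a left kernel vector
of the augmented PBH pencil `[A_aug - λI, B_aug]`. The identity block of `B_aug` forces `v = 0`;
what remains says `w [A - λI, B] = 0`, and then `w B M_c = 0` holds automatically. So the left
kernels of the two pencils correspond, for every `λ`.
-/

open Matrix

/-- A pair `(A, B)` is PBH-stabilizable if for every `λ ∈ ℂ` with `Re λ ≥ 0` the complex
matrix `[A - λI, B]` (complexified matrices placed side by side) has full row rank. -/
def PBHStabilizable {a b : Type*} [Fintype a] [DecidableEq a] [Fintype b]
    (A : Matrix a a ℝ) (B : Matrix a b ℝ) : Prop :=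
  ∀ l : ℂ, 0 ≤ l.re →
    (Matrix.fromCols (A.map Complex.ofReal - l • (1 : Matrix a a ℂ))
      (B.map Complex.ofReal)).rank = Fintype.card a

namespace Matrix

variable {K R m n n' o o' : Type*}

theorem rank_eq_card_iff_forall_vecMul_eq_zero [Field K] [Fintype m] [Fintype n]
    (M : Matrix m n K) : M.rank = Fintype.card m ↔ ∀ w, w ᵥ* M = 0 → w = 0 := by
  rw [rank_eq_finrank_span_row, eq_comm]
  exact linearIndependent_iff_card_eq_finrank_span.symm.trans <|
    vecMul_injective_iff.symm.trans (injective_iff_map_eq_zero M.vecMulLinear)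

theorem sumElim_vecMul_fromCols_fromBlocks_eq_zero_iff [Semiring R] [Fintype n] [Fintype m]
    [Fintype o] [DecidableEq o] (P : Matrix n n' R) (B : Matrix n m R) (M : Matrix m o' R)
    (Q : Matrix o n' R) (T : Matrix o o' R) (G : Matrix o m R) (w : n → R) (v : o → R) :
    Sum.elim w v ᵥ* fromCols (fromBlocks P (B * M) Q T) (fromBlocks B 0 G (1 : Matrix o o R)) =
      0 ↔ v = 0 ∧ w ᵥ* fromCols P B = 0 := by
  simp only [vecMul_fromCols, vecMul_fromBlocks, Sum.elim_comp_inl, Sum.elim_comp_inr,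
    vecMul_one, vecMul_zero, zero_add, ← Sum.elim_zero_zero, Sum.elim_eq_iff]
  constructor
  · rintro ⟨⟨hP, -⟩, hB, rfl⟩
    simp_all
  · rintro ⟨rfl, hP, hB⟩
    simp [hP, hB, ← vecMul_vecMul]

theorem rank_fromCols_fromBlocks_eq_card_iff [Field K] [Fintype n] [Fintype n'] [Fintype m]
    [Fintype o] [Fintype o'] [DecidableEq o] (P : Matrix n n' K) (B : Matrix n m K)
    (M : Matrix m o' K) (Q : Matrix o n' K) (T : Matrix o o' K) (G : Matrix o m K) :
    (fromCols (fromBlocks P (B * M) Q T) (fromBlocks B 0 G (1 : Matrix o o K))).rank =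
      Fintype.card (n ⊕ o) ↔ (fromCols P B).rank = Fintype.card n := by
  rw [rank_eq_card_iff_forall_vecMul_eq_zero, rank_eq_card_iff_forall_vecMul_eq_zero]
  constructor
  · intro h w hw
    have hw0 := h (Sum.elim w 0) <|
      (sumElim_vecMul_fromCols_fromBlocks_eq_zero_iff ..).2 ⟨rfl, hw⟩
    exact funext fun i => congrFun hw0 (Sum.inl i)
  · intro h u hu
    rw [← Sum.elim_comp_inl_inr u] at hu ⊢
    obtain ⟨hv, hw⟩ := (sumElim_vecMul_fromCols_fromBlocks_eq_zero_iff ..).1 hu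
    rw [hv, h _ hw, Sum.elim_zero_zero]

end Matrix

/-- **Lemma 1.** For arbitrary `M_des`, `M_c`, `G_a`, the augmented pair
`(A_aug, B_aug)` is PBH-stabilizable if and only if `(A, B)` is PBH-stabilizable. -/
theorem augmented_stabilizable_iff (n m p ν : ℕ)
    (A : Matrix (Fin n) (Fin n) ℝ) (B : Matrix (Fin n) (Fin m) ℝ)
    (C : Matrix (Fin p) (Fin n) ℝ) (D : Matrix (Fin p) (Fin m) ℝ)
    (S : Matrix (Fin ν) (Fin ν) ℝ)
    (Mdes : Matrix (Fin p) (Fin ν) ℝ) (Mc : Matrix (Fin m) (Fin ν) ℝ)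
    (Ga : Matrix (Fin ν) (Fin p) ℝ) :
    PBHStabilizable
      (Matrix.fromBlocks A (B * Mc) (Ga * C) (S - Ga * (Mdes - D * Mc)))
      (Matrix.fromBlocks B (0 : Matrix (Fin n) (Fin ν) ℝ) (Ga * D)
        (1 : Matrix (Fin ν) (Fin ν) ℝ)) ↔
    PBHStabilizable A B := by
  refine forall₂_congr fun l _ => ?_
  have hmul : (B * Mc).map Complex.ofReal = B.map Complex.ofReal * Mc.map Complex.ofReal :=
    Matrix.map_mul (f := Complex.ofRealHom)
  have hA : (fromBlocks A (B * Mc) (Ga * C) (S - Ga * (Mdes - D * Mc))).map Complex.ofReal -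
      l • 1 = fromBlocks (A.map Complex.ofReal - l • 1)
        (B.map Complex.ofReal * Mc.map Complex.ofReal) ((Ga * C).map Complex.ofReal)
        ((S - Ga * (Mdes - D * Mc)).map Complex.ofReal - l • 1) := by
    rw [fromBlocks_map, hmul]
    ext (i | i) (j | j) <;> simp [one_apply]
  have hB : (fromBlocks B 0 (Ga * D) (1 : Matrix (Fin ν) (Fin ν) ℝ)).map Complex.ofReal =
      fromBlocks (B.map Complex.ofReal) 0 ((Ga * D).map Complex.ofReal) 1 := by
    rw [fromBlocks_map]
    simp
  rw [hA, hB]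
  exact rank_fromCols_fromBlocks_eq_card_iff ..
end

section
/- (Key step in the proof of Lemma 2) Assume the spectra of A and S are disjoint. Let M_c ∈ ℝ^{m×ν} and M_des ∈ ℝ^{p×ν}, let Π̂ ∈ ℝ^{n×ν} satisfy Π̂S = AΠ̂ + B·M_c, and suppose M_des − M_open = CΠ̂ + D·M_c. Let λ ∈ ℂ not be an eigenvalue of A and let ω_0 ∈ ℂ^ν satisfy Sω_0 = λω_0 (complexified S). Then Π̂ω_0 = (λI_n − A)^{−1}B·M_c·ω_0, and C(λI_n − A)^{−1}B·M_c·ω_0 − (M_des − D·M_c)·ω_0 = −M_open·ω_0; in particular the left-hand side vanishes if and only if M_open·ω_0 = 0. -/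
open Matrix

/-- **key step in the proof of Lemma 2.** Assume the spectra of `A` and `S`
are disjoint, `Π̂S = AΠ̂ + BM_c`, and `M_des - M_open = CΠ̂ + DM_c` where
`M_open = CΠ + QL`. If `λ` is not an eigenvalue of `A` and `Sω₀ = λω₀`, then
`Π̂ω₀ = (λI - A)⁻¹BM_cω₀` and
`C(λI - A)⁻¹BM_cω₀ - (M_des - DM_c)ω₀ = -M_openω₀`; in particular the left-hand side
vanishes iff `M_openω₀ = 0`. -/
theorem detectability_key_step (n m p q ν : ℕ)
    (A : Matrix (Fin n) (Fin n) ℝ) (B : Matrix (Fin n) (Fin m) ℝ)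
    (C : Matrix (Fin p) (Fin n) ℝ) (D : Matrix (Fin p) (Fin m) ℝ)
    (P : Matrix (Fin n) (Fin q) ℝ) (Q : Matrix (Fin p) (Fin q) ℝ)
    (S : Matrix (Fin ν) (Fin ν) ℝ) (L : Matrix (Fin q) (Fin ν) ℝ)
    (hdisj : ∀ μ : ℂ, ¬(μ ∈ spectrum ℂ (A.map Complex.ofReal) ∧
      μ ∈ spectrum ℂ (S.map Complex.ofReal)))
    (Mdes : Matrix (Fin p) (Fin ν) ℝ) (Mc : Matrix (Fin m) (Fin ν) ℝ)
    (Pi : Matrix (Fin n) (Fin ν) ℝ) (hPi : Pi * S = A * Pi + P * L)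
    (Pihat : Matrix (Fin n) (Fin ν) ℝ) (hPihat : Pihat * S = A * Pihat + B * Mc)
    (hMc : Mdes - (C * Pi + Q * L) = C * Pihat + D * Mc)
    (l : ℂ) (hl : l ∉ spectrum ℂ (A.map Complex.ofReal))
    (ω0 : Fin ν → ℂ) (hω0 : (S.map Complex.ofReal).mulVec ω0 = l • ω0) :
    (Pihat.map Complex.ofReal).mulVec ω0 =
      ((l • (1 : Matrix (Fin n) (Fin n) ℂ) - A.map Complex.ofReal)⁻¹ *
        B.map Complex.ofReal * Mc.map Complex.ofReal).mulVec ω0 ∧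
    (C.map Complex.ofReal *
        (l • (1 : Matrix (Fin n) (Fin n) ℂ) - A.map Complex.ofReal)⁻¹ *
        B.map Complex.ofReal * Mc.map Complex.ofReal).mulVec ω0 -
      ((Mdes - D * Mc).map Complex.ofReal).mulVec ω0 =
      -(((C * Pi + Q * L).map Complex.ofReal).mulVec ω0) ∧
    ((C.map Complex.ofReal *
        (l • (1 : Matrix (Fin n) (Fin n) ℂ) - A.map Complex.ofReal)⁻¹ *
        B.map Complex.ofReal * Mc.map Complex.ofReal).mulVec ω0 -
      ((Mdes - D * Mc).map Complex.ofReal).mulVec ω0 = 0 ↔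
      ((C * Pi + Q * L).map Complex.ofReal).mulVec ω0 = 0) := by
  have mapmul : ∀ {a b c : ℕ} (X : Matrix (Fin a) (Fin b) ℝ) (Y : Matrix (Fin b) (Fin c) ℝ),
      (X * Y).map Complex.ofReal = X.map Complex.ofReal * Y.map Complex.ofReal := by
    intro a b c X Y
    exact Matrix.map_mul (f := Complex.ofRealHom)
  have mapadd : ∀ {a b : ℕ} (X Y : Matrix (Fin a) (Fin b) ℝ),
      (X + Y).map Complex.ofReal = X.map Complex.ofReal + Y.map Complex.ofReal := by
    intro a b X Y
    ext i j
    simp [Matrix.map_apply]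
  set A' := A.map Complex.ofReal
  set M := l • (1 : Matrix (Fin n) (Fin n) ℂ) - A'
  have hunit : IsUnit M := by
    have := spectrum.notMem_iff.mp hl
    rwa [Algebra.algebraMap_eq_smul_one] at this
  have hdet : IsUnit M.det := (Matrix.isUnit_iff_isUnit_det M).mp hunit
  have hinv : M⁻¹ * M = 1 := Matrix.nonsing_inv_mul M hdet
  set x := (Pihat.map Complex.ofReal).mulVec ω0 with hxdef
  have h : l • x = A'.mulVec x + (B.map Complex.ofReal * Mc.map Complex.ofReal).mulVec ω0 := by
    have h := congrArg (fun X => (X.map Complex.ofReal).mulVec ω0) hPihat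
    simp only [mapadd, mapmul, Matrix.add_mulVec, ← Matrix.mulVec_mulVec, hω0,
      Matrix.mulVec_smul] at h
    simpa [hxdef, Matrix.mulVec_mulVec] using h
  have hx : M.mulVec x = (B.map Complex.ofReal * Mc.map Complex.ofReal).mulVec ω0 := by
    simp only [M, Matrix.sub_mulVec, Matrix.smul_mulVec, Matrix.one_mulVec]
    rw [h]; abel
  have h1 : x = (M⁻¹ * B.map Complex.ofReal * Mc.map Complex.ofReal).mulVec ω0 := by
    have := congrArg (M⁻¹.mulVec) hx
    rw [Matrix.mulVec_mulVec, hinv, Matrix.one_mulVec, Matrix.mulVec_mulVec] at this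
    rw [this, Matrix.mul_assoc]
  have key : Mdes - D * Mc = C * Pihat + (C * Pi + Q * L) := by
    rw [sub_eq_iff_eq_add] at hMc
    rw [hMc]; abel
  have hC : (C.map Complex.ofReal * M⁻¹ * B.map Complex.ofReal * Mc.map Complex.ofReal).mulVec ω0
      = ((C * Pihat).map Complex.ofReal).mulVec ω0 := by
    have := congrArg (fun v => (C.map Complex.ofReal).mulVec v) h1
    simpa [Matrix.mulVec_mulVec, Matrix.mul_assoc, mapmul, hxdef] using this.symm
  have hkey := congrArg (fun X => (X.map Complex.ofReal).mulVec ω0) key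
  rw [mapadd, Matrix.add_mulVec] at hkey
  refine ⟨h1, ?_, ?_⟩
  · rw [hC, hkey]; abel
  · rw [hC, hkey]
    constructor
    · intro h'
      exact neg_eq_zero.mp (by rw [← h']; abel)
    · intro h'
      rw [h']; abel
end
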